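/- arXiv:1702.08017 — 6 statements merged into one kernel-verified Lean document; each statement's English description precedes it below -/
import Mathlib

section
/- Let A = ⟨Σ, V, α, β, {τ_σ}_{σ∈Σ}⟩ be a weighted finite automaton and let γ > 0 satisfy γ·ρ(A) < 1, where ρ(A) is the joint spectral radius of the transition maps. Then the map F_{A,γ} on the set 𝒮 of seminorms on V, defined by F_{A,γ}(s)(v) = |β(v)| + γ·max_{σ∈Σ} s(τ_σ(v)), has exactly one fixed point in 𝒮. -/
open Filter Topology ENNReal

noncomputable section

/-- For a finite string `x = x₁⋯x_t`, `wordMap τ x = τ_{x_t} ∘ ⋯ ∘ τ_{x_1}`. -/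
def wordMap {Sig : Type*} {V : Type*} [AddCommGroup V] [Module ℝ V]
    (τ : Sig → V →ₗ[ℝ] V) : List Sig → V →ₗ[ℝ] V
  | [] => LinearMap.id
  | σ :: x => (wordMap τ x).comp (τ σ)

/-- The length-`t` prefix of an infinite string `x ∈ Σ^∞`. -/
def strPrefix {Sig : Type*} (x : ℕ → Sig) (t : ℕ) : List Sig :=
  List.ofFn fun i : Fin t => x i

/-- The joint spectral radius of the family of transition maps of a WFA. -/
def jsr {Sig : Type*} [Fintype Sig] {V : Type*} [NormedAddCommGroup V]
    [NormedSpace ℝ V] [FiniteDimensional ℝ V] (τ : Sig → V →ₗ[ℝ] V) : ℝ :=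
  Filter.limsup (fun t : ℕ =>
    (⨆ x : Fin t → Sig, ‖LinearMap.toContinuousLinearMap (wordMap τ (List.ofFn x))‖)
      ^ ((1 : ℝ) / t)) Filter.atTop

theorem growth_bound {Sig : Type*} [Fintype Sig] [Nonempty Sig]
    {V : Type*} [NormedAddCommGroup V] [NormedSpace ℝ V] [FiniteDimensional ℝ V]
    (τ : Sig → V →ₗ[ℝ] V) (γ : ℝ) (hγ : 0 < γ) (hρ : γ * jsr τ < 1) :
    ∃ C θ : ℝ, 1 ≤ C ∧ 0 < θ ∧ γ * θ < 1 ∧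
      ∀ (t : ℕ) (x : Fin t → Sig) (v : V),
        ‖wordMap τ (List.ofFn x) v‖ ≤ C * θ ^ t * ‖v‖ := by
  classical
  -- the uniform bound M on single letters
  set M0 : ℝ := Finset.univ.sup' Finset.univ_nonempty
      (fun σ : Sig => ‖LinearMap.toContinuousLinearMap (τ σ)‖) with hM0
  set M : ℝ := max M0 1 with hM
  have hM1 : (1:ℝ) ≤ M := le_max_right _ _
  have hM0' : (0:ℝ) < M := lt_of_lt_of_le one_pos hM1
  have hMσ : ∀ (σ : Sig) (v : V), ‖τ σ v‖ ≤ M * ‖v‖ := by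
    intro σ v
    have h1 : ‖τ σ v‖ = ‖LinearMap.toContinuousLinearMap (τ σ) v‖ := rfl
    have h2 := (LinearMap.toContinuousLinearMap (τ σ)).le_opNorm v
    have h3 : ‖LinearMap.toContinuousLinearMap (τ σ)‖ ≤ M0 :=
      Finset.le_sup' (fun σ : Sig => ‖LinearMap.toContinuousLinearMap (τ σ)‖) (Finset.mem_univ σ)
    calc ‖τ σ v‖ ≤ ‖LinearMap.toContinuousLinearMap (τ σ)‖ * ‖v‖ := by rw [h1]; exact h2
      _ ≤ M * ‖v‖ := by
        apply mul_le_mul_of_nonneg_right _ (norm_nonneg v)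
        exact h3.trans (le_max_left _ _)
  have hlist : ∀ (l : List Sig) (v : V), ‖wordMap τ l v‖ ≤ M ^ l.length * ‖v‖ := by
    intro l
    induction l with
    | nil => intro v; simp [wordMap]
    | cons σ l ih =>
      intro v
      have : wordMap τ (σ :: l) v = wordMap τ l (τ σ v) := rfl
      rw [this]
      calc ‖wordMap τ l (τ σ v)‖ ≤ M ^ l.length * ‖τ σ v‖ := ih _
        _ ≤ M ^ l.length * (M * ‖v‖) := by
            apply mul_le_mul_of_nonneg_left (hMσ σ v) (pow_nonneg hM0'.le _)
        _ = M ^ (σ :: l).length * ‖v‖ := by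
            simp [List.length_cons, pow_succ]; ring
  -- the sequence u t
  set u : ℕ → ℝ := fun t =>
    ⨆ x : Fin t → Sig, ‖LinearMap.toContinuousLinearMap (wordMap τ (List.ofFn x))‖ with hu
  have hbdd : ∀ t : ℕ, BddAbove (Set.range fun x : Fin t → Sig =>
      ‖LinearMap.toContinuousLinearMap (wordMap τ (List.ofFn x))‖) :=
    fun t => Set.Finite.bddAbove (Set.finite_range _)
  have hu_ge : ∀ (t : ℕ) (x : Fin t → Sig),
      ‖LinearMap.toContinuousLinearMap (wordMap τ (List.ofFn x))‖ ≤ u t :=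
    fun t x => le_ciSup (hbdd t) x
  have hu_nonneg : ∀ t, 0 ≤ u t := by
    intro t
    exact le_trans (norm_nonneg _) (hu_ge t (Classical.arbitrary _))
  have hu_le : ∀ t, u t ≤ M ^ t := by
    intro t
    apply ciSup_le
    intro x
    apply ContinuousLinearMap.opNorm_le_bound _ (pow_nonneg hM0'.le _)
    intro v
    have := hlist (List.ofFn x) v
    simpa [List.length_ofFn] using this
  -- boundedness of the rpow sequence
  have ha_bdd : Filter.IsBoundedUnder (· ≤ ·) Filter.atTop
      (fun t : ℕ => u t ^ ((1:ℝ)/t)) := by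
    apply Filter.isBoundedUnder_of
    refine ⟨M, fun t => ?_⟩
    rcases Nat.eq_zero_or_pos t with ht | ht
    · subst ht
      rw [show ((1:ℝ)/((0:ℕ):ℝ)) = 0 by norm_num, Real.rpow_zero]
      exact hM1
    · have h1 : u t ^ ((1:ℝ)/t) ≤ (M ^ t) ^ ((1:ℝ)/t) :=
        Real.rpow_le_rpow (hu_nonneg t) (hu_le t) (by positivity)
      have htne : (t:ℝ) ≠ 0 := by exact_mod_cast ht.ne'
      have h2 : ((M:ℝ) ^ t) ^ ((1:ℝ)/t) = M := by
        rw [← Real.rpow_natCast M t, ← Real.rpow_mul hM0'.le,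
          mul_one_div, div_self htne, Real.rpow_one]
      rw [h2] at h1; exact h1
  have hjsr : jsr τ < 1/γ := by
    rw [lt_div_iff₀ hγ, mul_comm]; exact hρ
  set J : ℝ := max (jsr τ) 0 with hJdef
  have hJ0 : (0:ℝ) ≤ J := le_max_right _ _
  have hJ : J < 1/γ := max_lt hjsr (by positivity)
  set θ : ℝ := (J + 1/γ)/2 with hθdef
  have hθpos : 0 < θ := by
    have : (0:ℝ) < 1/γ := by positivity
    simp only [hθdef]; linarith
  have hJθ : J < θ := by simp only [hθdef]; linarith
  have hθγ : γ * θ < 1 := by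
    have h1 : θ < 1/γ := by simp only [hθdef]; linarith
    rw [lt_div_iff₀ hγ] at h1; linarith [h1]
  have h_ev : ∀ᶠ t in Filter.atTop, u t ^ ((1:ℝ)/t) < θ := by
    have hlt : jsr τ < θ := lt_of_le_of_lt (le_max_left _ _) hJθ
    exact Filter.eventually_lt_of_limsup_lt hlt ha_bdd
  obtain ⟨N, hN⟩ := Filter.eventually_atTop.mp h_ev
  have hut : ∀ t, max N 1 ≤ t → u t ≤ θ ^ t := by
    intro t ht
    have ht1 : 1 ≤ t := le_trans (le_max_right N 1) ht
    have htN : N ≤ t := le_trans (le_max_left N 1) ht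
    by_contra hcon
    push_neg at hcon
    have h1 : (θ ^ t) ^ ((1:ℝ)/t) < u t ^ ((1:ℝ)/t) :=
      Real.rpow_lt_rpow (by positivity) hcon (by positivity)
    have htne : (t:ℝ) ≠ 0 := by positivity
    have h2 : (θ ^ t) ^ ((1:ℝ)/t) = θ := by
      rw [← Real.rpow_natCast θ t, ← Real.rpow_mul hθpos.le,
        mul_one_div, div_self htne, Real.rpow_one]
    have h3 := hN t htN
    rw [h2] at h1; linarith
  have hrne : (Finset.range (max N 1)).Nonempty :=
    Finset.nonempty_range_iff.mpr (by omega)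
  set C0 : ℝ := (Finset.range (max N 1)).sup' hrne (fun t => u t / θ ^ t) with hC0
  set C : ℝ := max C0 1 with hC
  have huC : ∀ t, u t ≤ C * θ ^ t := by
    intro t
    have hp : (0:ℝ) < θ ^ t := pow_pos hθpos t
    rcases lt_or_ge t (max N 1) with h | h
    · have hmem : t ∈ Finset.range (max N 1) := Finset.mem_range.mpr h
      have h1 : u t / θ ^ t ≤ C0 := Finset.le_sup' (fun t => u t / θ ^ t) hmem
      rw [div_le_iff₀ hp] at h1
      calc u t ≤ C0 * θ ^ t := h1
        _ ≤ C * θ ^ t := mul_le_mul_of_nonneg_right (le_max_left _ _) hp.le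
    · calc u t ≤ θ ^ t := hut t h
        _ ≤ C * θ ^ t := le_mul_of_one_le_left hp.le (le_max_right _ _)
  refine ⟨C, θ, le_max_right _ _, hθpos, hθγ, ?_⟩
  intro t x v
  calc ‖wordMap τ (List.ofFn x) v‖
      = ‖LinearMap.toContinuousLinearMap (wordMap τ (List.ofFn x)) v‖ := rfl
    _ ≤ ‖LinearMap.toContinuousLinearMap (wordMap τ (List.ofFn x))‖ * ‖v‖ :=
        (LinearMap.toContinuousLinearMap (wordMap τ (List.ofFn x))).le_opNorm v
    _ ≤ u t * ‖v‖ := mul_le_mul_of_nonneg_right (hu_ge t x) (norm_nonneg v)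
    _ ≤ C * θ ^ t * ‖v‖ := mul_le_mul_of_nonneg_right (huC t) (norm_nonneg v)

theorem seminorm_le_norm {V : Type*} [NormedAddCommGroup V] [NormedSpace ℝ V]
    [FiniteDimensional ℝ V] (s : Seminorm ℝ V) :
    ∃ K : ℝ, 0 ≤ K ∧ ∀ v : V, s v ≤ K * ‖v‖ := by
  classical
  set b := Module.finBasis ℝ V with hb
  refine ⟨∑ i, ‖LinearMap.toContinuousLinearMap (b.coord i)‖ * s (b i), ?_, ?_⟩
  · exact Finset.sum_nonneg fun i _ => mul_nonneg (norm_nonneg _) (apply_nonneg s _)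
  · intro v
    conv_lhs => rw [← b.sum_repr v]
    refine le_trans
      (Finset.le_sum_of_subadditive s (map_zero s).le (map_add_le_add s) _ _) ?_
    rw [Finset.sum_mul]
    apply Finset.sum_le_sum
    intro i _
    rw [map_smul_eq_mul]
    have h1 : ‖b.repr v i‖ ≤ ‖LinearMap.toContinuousLinearMap (b.coord i)‖ * ‖v‖ := by
      have h := (LinearMap.toContinuousLinearMap (b.coord i)).le_opNorm v
      simpa [Module.Basis.coord_apply] using h
    calc ‖b.repr v i‖ * s (b i)
        ≤ (‖LinearMap.toContinuousLinearMap (b.coord i)‖ * ‖v‖) * s (b i) :=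
          mul_le_mul_of_nonneg_right h1 (apply_nonneg s _)
      _ = ‖LinearMap.toContinuousLinearMap (b.coord i)‖ * s (b i) * ‖v‖ := by ring

theorem abs_ciSup_sub_ciSup {ι : Type*} [Fintype ι] [Nonempty ι] (f g : ι → ℝ) :
    |(⨆ i, f i) - ⨆ i, g i| ≤ ⨆ i, |f i - g i| := by
  have hb : ∀ h : ι → ℝ, BddAbove (Set.range h) :=
    fun h => Set.Finite.bddAbove (Set.finite_range h)
  have key : ∀ f g : ι → ℝ, (⨆ i, f i) - (⨆ i, g i) ≤ ⨆ i, |f i - g i| := by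
    intro f g
    rw [sub_le_iff_le_add]
    apply ciSup_le
    intro i
    have h2 : g i ≤ ⨆ i, g i := le_ciSup (hb g) i
    have h3 : |f i - g i| ≤ ⨆ i, |f i - g i| := le_ciSup (hb fun j => |f j - g j|) i
    have h4 := le_abs_self (f i - g i)
    linarith
  rw [abs_sub_le_iff]
  constructor
  · exact key f g
  · have := key g f
    simpa [abs_sub_comm] using this

theorem add_ciSup_real {ι : Sort*} [Nonempty ι] {f : ι → ℝ}
    (hf : BddAbove (Set.range f)) (c : ℝ) :
    c + ⨆ i, f i = ⨆ i, (c + f i) :=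
  Monotone.map_ciSup_of_continuousAt (f := fun y : ℝ => c + y)
    (continuous_const.add continuous_id).continuousAt
    (fun _ _ h => add_le_add_right h c) hf

theorem fixed_point_aux {Sig : Type*} [Fintype Sig] [Nonempty Sig]
    {V : Type*} [NormedAddCommGroup V] [NormedSpace ℝ V] [FiniteDimensional ℝ V]
    (β : V →ₗ[ℝ] ℝ) (τ : Sig → V →ₗ[ℝ] V)
    (γ : ℝ) (hγ : 0 < γ)
    (C θ : ℝ) (hC1 : 1 ≤ C) (hθ : 0 < θ) (hr1 : γ * θ < 1)
    (hb : ∀ (t : ℕ) (x : Fin t → Sig) (v : V),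
        ‖wordMap τ (List.ofFn x) v‖ ≤ C * θ ^ t * ‖v‖) :
    ∃! s : Seminorm ℝ V, ∀ v : V, s v = |β v| + γ * ⨆ σ : Sig, s (τ σ v) := by
  classical
  have hC0 : (0:ℝ) < C := lt_of_lt_of_le one_pos hC1
  set r : ℝ := γ * θ with hrdef
  have hr0 : 0 ≤ r := by positivity
  set B : ℝ := ‖LinearMap.toContinuousLinearMap β‖ with hBdef
  have hB0 : 0 ≤ B := norm_nonneg _
  have hB : ∀ v : V, |β v| ≤ B * ‖v‖ := by
    intro v
    have h := (LinearMap.toContinuousLinearMap β).le_opNorm v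
    simpa [Real.norm_eq_abs] using h
  -- the summand
  set g : (ℕ → Sig) → V → ℕ → ℝ :=
    fun x v t => γ ^ t * |β (wordMap τ (strPrefix x t) v)| with hgdef
  have hg_nonneg : ∀ x v t, 0 ≤ g x v t := fun x v t => by positivity
  have hterm : ∀ x v t, g x v t ≤ (B * C * ‖v‖) * r ^ t := by
    intro x v t
    have h1 : |β (wordMap τ (strPrefix x t) v)| ≤ B * (C * θ ^ t * ‖v‖) := by
      refine (hB _).trans ?_
      exact mul_le_mul_of_nonneg_left (hb t (fun i => x i) v) hB0
    calc g x v t ≤ γ ^ t * (B * (C * θ ^ t * ‖v‖)) :=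
          mul_le_mul_of_nonneg_left h1 (pow_nonneg hγ.le t)
      _ = (B * C * ‖v‖) * r ^ t := by rw [hrdef, mul_pow]; ring
  have hsum_geom : ∀ v : V, Summable (fun t : ℕ => (B * C * ‖v‖) * r ^ t) :=
    fun v => (summable_geometric_of_lt_one hr0 hr1).mul_left _
  have hsumg : ∀ x v, Summable (g x v) := fun x v =>
    Summable.of_nonneg_of_le (hg_nonneg x v) (hterm x v) (hsum_geom v)
  set D : ℝ := B * C * (1 - r)⁻¹ with hDdef
  have hD0 : 0 ≤ D := by
    have : (0:ℝ) < 1 - r := by linarith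
    positivity
  set G : (ℕ → Sig) → V → ℝ := fun x v => ∑' t, g x v t with hGdef
  have hG_nonneg : ∀ x v, 0 ≤ G x v := fun x v => tsum_nonneg (hg_nonneg x v)
  have hG_le : ∀ x v, G x v ≤ D * ‖v‖ := by
    intro x v
    have h1 : G x v ≤ ∑' t, (B * C * ‖v‖) * r ^ t :=
      Summable.tsum_le_tsum (hterm x v) (hsumg x v) (hsum_geom v)
    have h2 : ∑' t : ℕ, (B * C * ‖v‖) * r ^ t = (B * C * ‖v‖) * (1 - r)⁻¹ := by
      rw [tsum_mul_left, tsum_geometric_of_lt_one hr0 hr1]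
    rw [h2] at h1
    calc G x v ≤ (B * C * ‖v‖) * (1 - r)⁻¹ := h1
      _ = D * ‖v‖ := by rw [hDdef]; ring
  have hGbdd : ∀ v : V, BddAbove (Set.range fun x : ℕ → Sig => G x v) := by
    intro v
    refine ⟨D * ‖v‖, ?_⟩
    rintro _ ⟨x, rfl⟩
    exact hG_le x v
  set S : V → ℝ := fun v => ⨆ x : ℕ → Sig, G x v with hSdef
  have hGS : ∀ x v, G x v ≤ S v := fun x v => le_ciSup (hGbdd v) x
  have hS_le : ∀ v, S v ≤ D * ‖v‖ := fun v => ciSup_le fun x => hG_le x v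
  -- shift and cons
  set shift : (ℕ → Sig) → (ℕ → Sig) := fun x n => x (n + 1) with hshift
  set cons : Sig → (ℕ → Sig) → (ℕ → Sig) :=
    fun σ y n => Nat.casesOn n σ (fun m => y m) with hcons
  have hsucc : ∀ x v t, g x v (t + 1) = γ * g (shift x) (τ (x 0) v) t := by
    intro x v t
    have hpre : strPrefix x (t + 1) = x 0 :: strPrefix (shift x) t := by
      unfold strPrefix
      rw [List.ofFn_succ]
      congr 1
    have : wordMap τ (strPrefix x (t+1)) v
        = wordMap τ (strPrefix (shift x) t) (τ (x 0) v) := by rw [hpre]; rfl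
    simp only [hgdef, this, pow_succ]
    ring
  have hGfix : ∀ x v, G x v = |β v| + γ * G (shift x) (τ (x 0) v) := by
    intro x v
    have h0 : g x v 0 = |β v| := by
      simp [hgdef, strPrefix, wordMap]
    calc G x v = g x v 0 + ∑' t, g x v (t + 1) := Summable.tsum_eq_zero_add (hsumg x v)
      _ = |β v| + ∑' t, γ * g (shift x) (τ (x 0) v) t := by
          rw [h0]; congr 1; exact tsum_congr fun t => hsucc x v t
      _ = |β v| + γ * G (shift x) (τ (x 0) v) := by rw [tsum_mul_left]
  have hSbddFin : ∀ (f : Sig → ℝ), BddAbove (Set.range f) :=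
    fun f => Set.Finite.bddAbove (Set.finite_range f)
  -- fixed point property of S
  have hSfix : ∀ v : V, S v = |β v| + γ * ⨆ σ : Sig, S (τ σ v) := by
    intro v
    have hbdd3 : BddAbove (Set.range fun x : ℕ → Sig => G (shift x) (τ (x 0) v)) := by
      refine ⟨Finset.univ.sup' Finset.univ_nonempty (fun σ : Sig => D * ‖τ σ v‖), ?_⟩
      rintro _ ⟨x, rfl⟩
      exact (hG_le _ _).trans (Finset.le_sup' (fun σ : Sig => D * ‖τ σ v‖)
        (Finset.mem_univ (x 0)))
    have hbdd2 : BddAbove (Set.range fun x : ℕ → Sig =>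
        γ * G (shift x) (τ (x 0) v)) := by
      obtain ⟨b, hb2⟩ := hbdd3
      refine ⟨γ * b, ?_⟩
      rintro _ ⟨x, rfl⟩
      exact mul_le_mul_of_nonneg_left (hb2 ⟨x, rfl⟩) hγ.le
    have h1 : S v = ⨆ x : ℕ → Sig, (|β v| + γ * G (shift x) (τ (x 0) v)) :=
      iSup_congr fun x => hGfix x v
    have h2 : S v = |β v| + ⨆ x : ℕ → Sig, γ * G (shift x) (τ (x 0) v) := by
      rw [h1, ← add_ciSup_real hbdd2]
    have h3 : (⨆ x : ℕ → Sig, G (shift x) (τ (x 0) v)) = ⨆ σ : Sig, S (τ σ v) := by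
      apply le_antisymm
      · apply ciSup_le
        intro x
        have hx : G (shift x) (τ (x 0) v) ≤ S (τ (x 0) v) := hGS (shift x) _
        exact hx.trans (le_ciSup (hSbddFin fun σ => S (τ σ v)) (x 0))
      · apply ciSup_le
        intro σ
        apply ciSup_le
        intro y
        have h := le_ciSup hbdd3 (cons σ y)
        exact h
    rw [h2, ← Real.mul_iSup_of_nonneg hγ.le, h3]
  -- S is a seminorm
  have hadd : ∀ u v : V, S (u + v) ≤ S u + S v := by
    intro u v
    apply ciSup_le
    intro x
    have hpt : ∀ t, g x (u + v) t ≤ g x u t + g x v t := by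
      intro t
      have h1 : |β (wordMap τ (strPrefix x t) (u + v))|
          ≤ |β (wordMap τ (strPrefix x t) u)| + |β (wordMap τ (strPrefix x t) v)| := by
        rw [map_add, map_add]
        exact abs_add_le _ _
      calc g x (u+v) t ≤ γ ^ t * (|β (wordMap τ (strPrefix x t) u)|
            + |β (wordMap τ (strPrefix x t) v)|) :=
          mul_le_mul_of_nonneg_left h1 (pow_nonneg hγ.le t)
        _ = g x u t + g x v t := by simp only [hgdef]; ring
    have h2 : G x (u + v) ≤ ∑' t, (g x u t + g x v t) :=
      Summable.tsum_le_tsum hpt (hsumg x (u+v)) ((hsumg x u).add (hsumg x v))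
    rw [Summable.tsum_add (hsumg x u) (hsumg x v)] at h2
    exact h2.trans (add_le_add (hGS x u) (hGS x v))
  have hsmul : ∀ (a : ℝ) (v : V), S (a • v) = ‖a‖ * S v := by
    intro a v
    have hGa : ∀ x, G x (a • v) = |a| * G x v := by
      intro x
      have hpt : ∀ t, g x (a • v) t = |a| * g x v t := by
        intro t
        simp only [hgdef, map_smul, smul_eq_mul, abs_mul]
        ring
      calc G x (a • v) = ∑' t, |a| * g x v t := tsum_congr hpt
        _ = |a| * G x v := tsum_mul_left
    calc S (a • v) = ⨆ x : ℕ → Sig, |a| * G x v := iSup_congr hGa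
      _ = |a| * S v := (Real.mul_iSup_of_nonneg (abs_nonneg a) _).symm
      _ = ‖a‖ * S v := by rw [Real.norm_eq_abs]
  set SS : Seminorm ℝ V := Seminorm.of S hadd hsmul with hSS
  have hSSfix : ∀ v : V, SS v = |β v| + γ * ⨆ σ : Sig, SS (τ σ v) := hSfix
  -- uniqueness
  have uniq : ∀ s s' : Seminorm ℝ V,
      (∀ v : V, s v = |β v| + γ * ⨆ σ : Sig, s (τ σ v)) →
      (∀ v : V, s' v = |β v| + γ * ⨆ σ : Sig, s' (τ σ v)) → s = s' := by
    intro s s' hs hs'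
    obtain ⟨K, hK0, hK⟩ := seminorm_le_norm s
    obtain ⟨K', hK'0, hK'⟩ := seminorm_le_norm s'
    have hFinBdd : ∀ (t : ℕ) (f : (Fin t → Sig) → ℝ), BddAbove (Set.range f) :=
      fun t f => Set.Finite.bddAbove (Set.finite_range f)
    have key : ∀ (t : ℕ) (v : V), |s v - s' v| ≤ γ ^ t *
        ⨆ x : Fin t → Sig,
          |s (wordMap τ (List.ofFn x) v) - s' (wordMap τ (List.ofFn x) v)| := by
      intro t
      induction t with
      | zero =>
        intro v
        simp [wordMap, List.ofFn_zero, ciSup_const]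
      | succ t ih =>
        intro v
        have h1 : s v - s' v = γ * ((⨆ σ : Sig, s (τ σ v)) - ⨆ σ : Sig, s' (τ σ v)) := by
          rw [hs v, hs' v]; ring
        rw [h1, abs_mul, abs_of_pos hγ]
        have h2 : |(⨆ σ : Sig, s (τ σ v)) - ⨆ σ : Sig, s' (τ σ v)|
            ≤ ⨆ σ : Sig, |s (τ σ v) - s' (τ σ v)| := abs_ciSup_sub_ciSup _ _
        have h3 : (⨆ σ : Sig, |s (τ σ v) - s' (τ σ v)|)
            ≤ ⨆ σ : Sig, γ ^ t * ⨆ x : Fin t → Sig,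
              |s (wordMap τ (List.ofFn x) (τ σ v)) - s' (wordMap τ (List.ofFn x) (τ σ v))| :=
          ciSup_mono (hSbddFin _) fun σ => ih (τ σ v)
        have h4 : (⨆ σ : Sig, γ ^ t * ⨆ x : Fin t → Sig,
              |s (wordMap τ (List.ofFn x) (τ σ v)) - s' (wordMap τ (List.ofFn x) (τ σ v))|)
            = γ ^ t * ⨆ σ : Sig, ⨆ x : Fin t → Sig,
              |s (wordMap τ (List.ofFn x) (τ σ v)) - s' (wordMap τ (List.ofFn x) (τ σ v))| :=
          (Real.mul_iSup_of_nonneg (pow_nonneg hγ.le t) _).symm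
        have h5 : (⨆ σ : Sig, ⨆ x : Fin t → Sig,
              |s (wordMap τ (List.ofFn x) (τ σ v)) - s' (wordMap τ (List.ofFn x) (τ σ v))|)
            = ⨆ y : Fin (t+1) → Sig,
              |s (wordMap τ (List.ofFn y) v) - s' (wordMap τ (List.ofFn y) v)| := by
          have hw : ∀ y : Fin (t+1) → Sig, wordMap τ (List.ofFn y) v
              = wordMap τ (List.ofFn (fun i : Fin t => y i.succ)) (τ (y 0) v) := by
            intro y
            rw [List.ofFn_succ]
            rfl
          apply le_antisymm
          · apply ciSup_le; intro σ
            apply ciSup_le; intro x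
            have hmem := le_ciSup (hFinBdd (t+1) fun y : Fin (t+1) → Sig =>
              |s (wordMap τ (List.ofFn y) v) - s' (wordMap τ (List.ofFn y) v)|)
              (Fin.cons σ x)
            refine le_trans (le_of_eq ?_) hmem
            rw [hw (Fin.cons σ x)]
            simp [Fin.cons_succ, Fin.cons_zero]
          · apply ciSup_le; intro y
            rw [hw y]
            refine le_trans (le_ciSup (hFinBdd t fun x : Fin t → Sig =>
              |s (wordMap τ (List.ofFn x) (τ (y 0) v))
                - s' (wordMap τ (List.ofFn x) (τ (y 0) v))|) (fun i => y i.succ)) ?_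
            exact le_ciSup (hSbddFin fun σ : Sig => ⨆ x : Fin t → Sig,
              |s (wordMap τ (List.ofFn x) (τ σ v))
                - s' (wordMap τ (List.ofFn x) (τ σ v))|) (y 0)
        calc γ * |(⨆ σ : Sig, s (τ σ v)) - ⨆ σ : Sig, s' (τ σ v)|
            ≤ γ * (⨆ σ : Sig, γ ^ t * ⨆ x : Fin t → Sig,
              |s (wordMap τ (List.ofFn x) (τ σ v)) - s' (wordMap τ (List.ofFn x) (τ σ v))|) :=
              mul_le_mul_of_nonneg_left (h2.trans h3) hγ.le
          _ = γ ^ (t+1) * ⨆ y : Fin (t+1) → Sig,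
              |s (wordMap τ (List.ofFn y) v) - s' (wordMap τ (List.ofFn y) v)| := by
              rw [h4, h5, pow_succ]; ring
    ext v
    have hbound : ∀ t : ℕ, |s v - s' v| ≤ ((K + K') * C * ‖v‖) * r ^ t := by
      intro t
      refine (key t v).trans ?_
      have hsup : (⨆ x : Fin t → Sig,
          |s (wordMap τ (List.ofFn x) v) - s' (wordMap τ (List.ofFn x) v)|)
          ≤ (K + K') * (C * θ ^ t * ‖v‖) := by
        apply ciSup_le
        intro x
        set w := wordMap τ (List.ofFn x) v with hw
        have h1 : |s w - s' w| ≤ s w + s' w := by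
          have := abs_sub (s w) (s' w)
          rw [abs_of_nonneg (apply_nonneg s w), abs_of_nonneg (apply_nonneg s' w)] at this
          exact this
        have h2 : s w + s' w ≤ (K + K') * ‖w‖ := by
          have := add_le_add (hK w) (hK' w)
          calc s w + s' w ≤ K * ‖w‖ + K' * ‖w‖ := this
            _ = (K + K') * ‖w‖ := by ring
        refine h1.trans (h2.trans ?_)
        exact mul_le_mul_of_nonneg_left (hb t x v) (by linarith)
      calc γ ^ t * (⨆ x : Fin t → Sig,
          |s (wordMap τ (List.ofFn x) v) - s' (wordMap τ (List.ofFn x) v)|)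
          ≤ γ ^ t * ((K + K') * (C * θ ^ t * ‖v‖)) :=
            mul_le_mul_of_nonneg_left hsup (pow_nonneg hγ.le t)
        _ = ((K + K') * C * ‖v‖) * r ^ t := by rw [hrdef, mul_pow]; ring
    have hlim : Tendsto (fun t : ℕ => ((K + K') * C * ‖v‖) * r ^ t) atTop (𝓝 0) := by
      have h := tendsto_pow_atTop_nhds_zero_of_lt_one hr0 hr1
      simpa using h.const_mul ((K + K') * C * ‖v‖)
    have h0 : |s v - s' v| ≤ 0 := ge_of_tendsto hlim (Eventually.of_forall hbound)
    have : s v - s' v = 0 := abs_eq_zero.mp (le_antisymm h0 (abs_nonneg _))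
    linarith
  exact ⟨SS, hSSfix, fun s hsx => uniq s SS hsx hSSfix⟩


/-- If `γ·ρ(A) < 1` then the map `F_{A,γ}` on seminorms,
`F_{A,γ}(s)(v) = |β(v)| + γ·max_σ s(τ_σ(v))`, has exactly one fixed point. -/
theorem stmt0 {Sig : Type*} [Fintype Sig] [Nonempty Sig]
    {V : Type*} [NormedAddCommGroup V] [NormedSpace ℝ V] [FiniteDimensional ℝ V]
    (α : V) (β : V →ₗ[ℝ] ℝ) (τ : Sig → V →ₗ[ℝ] V)
    (γ : ℝ) (hγ : 0 < γ) (hρ : γ * jsr τ < 1) :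
    ∃! s : Seminorm ℝ V, ∀ v : V, s v = |β v| + γ * ⨆ σ : Sig, s (τ σ v) := by
  obtain ⟨C, θ, hC1, hθ, hr1, hb⟩ := growth_bound τ γ hγ hρ
  exact fixed_point_aux β τ γ hγ C θ hC1 hθ hr1 hb
end
end

section
/- Let A = ⟨Σ, V, α, β, {τ_σ}_{σ∈Σ}⟩ be a weighted finite automaton and γ > 0 with γ·ρ(A) < 1, and let s_{A,γ} be the unique fixed point of F_{A,γ} on the set of seminorms on V. Then for every v ∈ V, the supremum sup_{x∈Σ^∞} Σ_{t=0}^∞ γ^t |β(τ_{x_{≤t}}(v))| is finite and equals s_{A,γ}(v). -/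
open Filter Topology ENNReal

noncomputable section

lemma wordMap_append {Sig : Type*} {V : Type*} [AddCommGroup V] [Module ℝ V]
    (τ : Sig → V →ₗ[ℝ] V) (l : List Sig) (σ : Sig) (v : V) :
    wordMap τ (l ++ [σ]) v = τ σ (wordMap τ l v) := by
  induction l generalizing v with
  | nil => rfl
  | cons a l ih =>
    simp only [List.cons_append, wordMap, LinearMap.comp_apply]
    exact ih _

lemma strPrefix_succ {Sig : Type*} (x : ℕ → Sig) (t : ℕ) :
    strPrefix x (t + 1) = strPrefix x t ++ [x t] := by
  unfold strPrefix
  rw [List.ofFn_succ']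
  simp [List.concat_eq_append]

lemma seminorm_le_const {V : Type*} [NormedAddCommGroup V] [NormedSpace ℝ V]
    [FiniteDimensional ℝ V] (s : Seminorm ℝ V) :
    ∃ C : ℝ, 0 ≤ C ∧ ∀ v, s v ≤ C * ‖v‖ := by
  set b := Module.finBasis ℝ V with hb
  refine ⟨∑ i, ‖LinearMap.toContinuousLinearMap (b.coord i)‖ * s (b i),
    Finset.sum_nonneg fun i _ => mul_nonneg (norm_nonneg _) (apply_nonneg s _), fun v => ?_⟩
  calc s v = s (∑ i, b.repr v i • b i) := by rw [b.sum_repr]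
    _ ≤ ∑ i, s (b.repr v i • b i) :=
        Finset.le_sum_of_subadditive s (map_zero s).le (map_add_le_add s) _ _
    _ ≤ ∑ i, (‖LinearMap.toContinuousLinearMap (b.coord i)‖ * ‖v‖) * s (b i) := by
        refine Finset.sum_le_sum fun i _ => ?_
        rw [map_smul_eq_mul]
        refine mul_le_mul_of_nonneg_right ?_ (apply_nonneg s _)
        have h := (LinearMap.toContinuousLinearMap (b.coord i)).le_opNorm v
        simpa [Real.norm_eq_abs, Module.Basis.coord_apply] using h
    _ = (∑ i, ‖LinearMap.toContinuousLinearMap (b.coord i)‖ * s (b i)) * ‖v‖ := by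
        rw [Finset.sum_mul]; exact Finset.sum_congr rfl fun i _ => by ring

/-- Closed form for the fixed-point seminorm: for each `v`,
`sup_{x∈Σ^∞} Σ_t γ^t |β(τ_{x≤t}(v))|` is finite and equals `s_{A,γ}(v)`. -/
theorem stmt1 {Sig : Type*} [Fintype Sig] [Nonempty Sig]
    {V : Type*} [NormedAddCommGroup V] [NormedSpace ℝ V] [FiniteDimensional ℝ V]
    (α : V) (β : V →ₗ[ℝ] ℝ) (τ : Sig → V →ₗ[ℝ] V)
    (γ : ℝ) (hγ : 0 < γ) (hρ : γ * jsr τ < 1)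
    (s : Seminorm ℝ V) (hs : ∀ v : V, s v = |β v| + γ * ⨆ σ : Sig, s (τ σ v)) :
    ∀ v : V,
      (⨆ x : ℕ → Sig, ∑' t : ℕ,
          ENNReal.ofReal (γ ^ t * |β (wordMap τ (strPrefix x t) v)|)) =
        ENNReal.ofReal (s v) := by
  classical
  intro v
  obtain ⟨C, hC0, hC⟩ := seminorm_le_const s
  -- a uniform bound on the transition maps
  obtain ⟨σM, hσM⟩ := Finite.exists_max fun σ : Sig =>
    ‖LinearMap.toContinuousLinearMap (τ σ)‖
  set K : ℝ := max ‖LinearMap.toContinuousLinearMap (τ σM)‖ 1 with hK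
  have hK1 : (1 : ℝ) ≤ K := le_max_right _ _
  have hK0 : (0 : ℝ) ≤ K := le_trans zero_le_one hK1
  have hτK : ∀ (σ : Sig) (w : V), ‖τ σ w‖ ≤ K * ‖w‖ := by
    intro σ w
    have h := (LinearMap.toContinuousLinearMap (τ σ)).le_opNorm w
    simp only [LinearMap.coe_toContinuousLinearMap'] at h
    exact h.trans (mul_le_mul_of_nonneg_right ((hσM σ).trans (le_max_left _ _)) (norm_nonneg _))
  have hword : ∀ (l : List Sig) (w : V), ‖wordMap τ l w‖ ≤ K ^ l.length * ‖w‖ := by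
    intro l
    induction l with
    | nil => intro w; simp [wordMap]
    | cons σ l ih =>
      intro w
      have h1 : ‖wordMap τ (σ :: l) w‖ = ‖wordMap τ l (τ σ w)‖ := rfl
      rw [h1]
      calc ‖wordMap τ l (τ σ w)‖ ≤ K ^ l.length * ‖τ σ w‖ := ih _
        _ ≤ K ^ l.length * (K * ‖w‖) :=
            mul_le_mul_of_nonneg_left (hτK σ w) (pow_nonneg hK0 _)
        _ = K ^ (σ :: l).length * ‖w‖ := by
            simp [List.length_cons, pow_succ]; ring
  have hopnorm : ∀ l : List Sig,
      ‖LinearMap.toContinuousLinearMap (wordMap τ l)‖ ≤ K ^ l.length := by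
    intro l
    refine ContinuousLinearMap.opNorm_le_bound _ (pow_nonneg hK0 _) fun w => ?_
    simpa [LinearMap.coe_toContinuousLinearMap'] using hword l w
  -- the sequence in the limsup
  set a : ℕ → ℝ := fun t =>
    ⨆ x : Fin t → Sig, ‖LinearMap.toContinuousLinearMap (wordMap τ (List.ofFn x))‖ with ha
  have hbdd_range : ∀ t : ℕ, BddAbove (Set.range fun x : Fin t → Sig =>
      ‖LinearMap.toContinuousLinearMap (wordMap τ (List.ofFn x))‖) := fun t =>
    Set.Finite.bddAbove (Set.finite_range _)
  have ha0 : ∀ t, 0 ≤ a t := by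
    intro t
    have : (0 : ℝ) ≤ ‖LinearMap.toContinuousLinearMap
        (wordMap τ (List.ofFn fun _ : Fin t => Classical.arbitrary Sig))‖ := norm_nonneg _
    exact this.trans (le_ciSup (hbdd_range t) _)
  have haK : ∀ t : ℕ, a t ≤ K ^ t := by
    intro t
    refine ciSup_le fun x => ?_
    have := hopnorm (List.ofFn x)
    simpa [List.length_ofFn] using this
  have hbdd : IsBoundedUnder (· ≤ ·) atTop
      (fun t : ℕ => a t ^ ((1 : ℝ) / t)) := by
    refine isBoundedUnder_of ⟨K, fun t => ?_⟩
    rcases Nat.eq_zero_or_pos t with ht | ht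
    · subst ht; simpa using hK1
    · have htne : (t : ℝ) ≠ 0 := Nat.cast_ne_zero.mpr ht.ne'
      calc a t ^ ((1 : ℝ) / t) ≤ (K ^ t) ^ ((1 : ℝ) / t) :=
            Real.rpow_le_rpow (ha0 t) (haK t) (by positivity)
        _ = K := by
            rw [← Real.rpow_natCast K t, ← Real.rpow_mul hK0]
            rw [mul_one_div, div_self htne, Real.rpow_one]
  have hjsr0 : 0 ≤ jsr τ := by
    refine le_limsup_of_frequently_le (Frequently.of_forall fun t => ?_) hbdd
    exact Real.rpow_nonneg (ha0 t) _
  -- choose r with jsr < r < 1/γ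
  have hjsrγ : jsr τ < 1 / γ := by
    rw [lt_div_iff₀ hγ]; linarith [hρ]
  set r : ℝ := (jsr τ + 1 / γ) / 2 with hr
  have hr1 : jsr τ < r := by
    have := hjsrγ; simp only [hr]; linarith
  have hr0 : 0 < r := by
    have hγ' : 0 < 1 / γ := by positivity
    simp only [hr]; linarith
  have hr2 : r < 1 / γ := by simp only [hr]; linarith [hjsrγ]
  have hγr : γ * r < 1 := by
    rw [lt_div_iff₀ hγ] at hr2; linarith [hr2]
  have hev : ∀ᶠ t in atTop, a t ^ ((1 : ℝ) / t) < r :=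
    eventually_lt_of_limsup_lt hr1 hbdd
  obtain ⟨T₀, hT₀⟩ := eventually_atTop.mp (hev.and (eventually_ge_atTop 1))
  have hkey : ∀ t ≥ T₀, ∀ y : Fin t → Sig,
      ‖LinearMap.toContinuousLinearMap (wordMap τ (List.ofFn y))‖ ≤ r ^ t := by
    intro t ht y
    obtain ⟨h1, h2⟩ := hT₀ t ht
    have htne : (t : ℝ) ≠ 0 := Nat.cast_ne_zero.mpr (by omega)
    have h3 : a t < r ^ t := by
      have h4 : (a t ^ ((1 : ℝ) / t)) ^ (t : ℝ) < r ^ (t : ℝ) :=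
        Real.rpow_lt_rpow (Real.rpow_nonneg (ha0 t) _) h1 (by positivity)
      rwa [← Real.rpow_mul (ha0 t), one_div, inv_mul_cancel₀ htne,
        Real.rpow_one, Real.rpow_natCast] at h4
    exact (le_ciSup (hbdd_range t) y).trans h3.le
  -- basic seminorm facts
  have hbdd_s : ∀ w : V, BddAbove (Set.range fun σ : Sig => s (τ σ w)) := fun w =>
    Set.Finite.bddAbove (Set.finite_range _)
  have hstep_le : ∀ (w : V) (σ : Sig), |β w| + γ * s (τ σ w) ≤ s w := by
    intro w σ
    rw [hs w]
    exact add_le_add le_rfl (mul_le_mul_of_nonneg_left (le_ciSup (hbdd_s w) σ) hγ.le)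
  -- the greedy string
  have hcex : ∀ w : V, ∃ σ : Sig, ∀ σ', s (τ σ' w) ≤ s (τ σ w) := fun w =>
    Finite.exists_max fun σ => s (τ σ w)
  choose c hc using hcex
  have hstep_eq : ∀ w : V, s w = |β w| + γ * s (τ (c w) w) := by
    intro w
    rw [hs w]
    congr 1
    have := le_antisymm (ciSup_le (hc w)) (le_ciSup (hbdd_s w) (c w))
    rw [this]
  set u : ℕ → V := fun n => Nat.rec v (fun _ w => τ (c w) w) n with hu_def
  have hu_zero : u 0 = v := rfl
  have hu_succ : ∀ n, u (n + 1) = τ (c (u n)) (u n) := fun n => rfl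
  set xg : ℕ → Sig := fun n => c (u n) with hxg
  have hu : ∀ t, wordMap τ (strPrefix xg t) v = u t := by
    intro t
    induction t with
    | zero => rfl
    | succ t ih => rw [strPrefix_succ, wordMap_append, ih]
  -- partial-sum inequality for arbitrary strings
  have hA : ∀ (x : ℕ → Sig) (T : ℕ),
      (∑ t ∈ Finset.range T, γ ^ t * |β (wordMap τ (strPrefix x t) v)|)
        + γ ^ T * s (wordMap τ (strPrefix x T) v) ≤ s v := by
    intro x T
    induction T with
    | zero => simp [strPrefix, wordMap]
    | succ T ih =>
      rw [Finset.sum_range_succ, strPrefix_succ, wordMap_append]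
      set w := wordMap τ (strPrefix x T) v with hw
      have h1 : |β w| + γ * s (τ (x T) w) ≤ s w := hstep_le _ _
      have h3 : γ ^ T * |β w| + γ ^ T * (γ * s (τ (x T) w)) ≤ γ ^ T * s w := by
        rw [← mul_add]; exact mul_le_mul_of_nonneg_left h1 (pow_nonneg hγ.le T)
      have h4 : γ ^ T * (γ * s (τ (x T) w)) = γ ^ (T + 1) * s (τ (x T) w) := by ring
      linarith [ih]
  -- partial-sum equality for the greedy string
  have hB : ∀ T : ℕ,
      (∑ t ∈ Finset.range T, γ ^ t * |β (u t)|) + γ ^ T * s (u T) = s v := by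
    intro T
    induction T with
    | zero => simp [hu_zero]
    | succ T ih =>
      rw [Finset.sum_range_succ]
      have h5 : γ ^ T * s (u T) = γ ^ T * |β (u T)| + γ ^ T * (γ * s (τ (c (u T)) (u T))) := by
        rw [hstep_eq (u T)]; ring
      have h4 : γ ^ (T + 1) * s (u (T + 1)) = γ ^ T * (γ * s (τ (c (u T)) (u T))) := by
        rw [hu_succ T]; ring
      linarith [ih]
  -- tail term vanishes along the greedy string
  have htail : Tendsto (fun T : ℕ => γ ^ T * s (u T)) atTop (𝓝 0) := by
    have hg : Tendsto (fun T : ℕ => (C * ‖v‖) * (γ * r) ^ T) atTop (𝓝 ((C * ‖v‖) * 0)) :=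
      (tendsto_pow_atTop_nhds_zero_of_lt_one (by positivity) hγr).const_mul _
    rw [mul_zero] at hg
    refine squeeze_zero' (Eventually.of_forall fun T =>
      mul_nonneg (pow_nonneg hγ.le T) (apply_nonneg s _)) ?_ hg
    filter_upwards [eventually_ge_atTop T₀] with T hT
    have h1 : ‖u T‖ ≤ r ^ T * ‖v‖ := by
      rw [← hu T]
      have h2 := (LinearMap.toContinuousLinearMap
        (wordMap τ (strPrefix xg T))).le_opNorm v
      simp only [LinearMap.coe_toContinuousLinearMap'] at h2
      refine h2.trans (mul_le_mul_of_nonneg_right ?_ (norm_nonneg _))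
      exact hkey T hT fun i : Fin T => xg i
    have h3 : s (u T) ≤ C * (r ^ T * ‖v‖) :=
      (hC (u T)).trans (mul_le_mul_of_nonneg_left h1 hC0)
    calc γ ^ T * s (u T) ≤ γ ^ T * (C * (r ^ T * ‖v‖)) :=
          mul_le_mul_of_nonneg_left h3 (pow_nonneg hγ.le T)
      _ = (C * ‖v‖) * (γ * r) ^ T := by rw [mul_pow]; ring
  have hptend : Tendsto (fun T : ℕ => ∑ t ∈ Finset.range T, γ ^ t * |β (u t)|)
      atTop (𝓝 (s v)) := by
    have heq : (fun T : ℕ => ∑ t ∈ Finset.range T, γ ^ t * |β (u t)|)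
        = fun T : ℕ => s v - γ ^ T * s (u T) := funext fun T => by linarith [hB T]
    rw [heq]
    simpa using (tendsto_const_nhds (x := s v)).sub htail
  -- upper bound
  have hupper : ∀ x : ℕ → Sig,
      (∑' t : ℕ, ENNReal.ofReal (γ ^ t * |β (wordMap τ (strPrefix x t) v)|))
        ≤ ENNReal.ofReal (s v) := by
    intro x
    rw [ENNReal.tsum_eq_iSup_nat]
    refine iSup_le fun T => ?_
    rw [← ENNReal.ofReal_sum_of_nonneg fun t _ =>
      mul_nonneg (pow_nonneg hγ.le t) (abs_nonneg _)]
    refine ENNReal.ofReal_le_ofReal ?_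
    have := hA x T
    have h0 : 0 ≤ γ ^ T * s (wordMap τ (strPrefix x T) v) :=
      mul_nonneg (pow_nonneg hγ.le T) (apply_nonneg s _)
    linarith
  -- lower bound via the greedy string
  have hlower : ENNReal.ofReal (s v) ≤
      ∑' t : ℕ, ENNReal.ofReal (γ ^ t * |β (wordMap τ (strPrefix xg t) v)|) := by
    have h1 : ∀ T : ℕ,
        ENNReal.ofReal (∑ t ∈ Finset.range T, γ ^ t * |β (u t)|) ≤
          ∑' t : ℕ, ENNReal.ofReal (γ ^ t * |β (wordMap τ (strPrefix xg t) v)|) := by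
      intro T
      rw [ENNReal.ofReal_sum_of_nonneg fun t _ =>
        mul_nonneg (pow_nonneg hγ.le t) (abs_nonneg _)]
      have h2 : (∑ t ∈ Finset.range T, ENNReal.ofReal (γ ^ t * |β (u t)|))
          = ∑ t ∈ Finset.range T,
              ENNReal.ofReal (γ ^ t * |β (wordMap τ (strPrefix xg t) v)|) :=
        Finset.sum_congr rfl fun t _ => by rw [hu t]
      rw [h2]
      exact ENNReal.sum_le_tsum _
    have h3 : Tendsto (fun T : ℕ =>
        ENNReal.ofReal (∑ t ∈ Finset.range T, γ ^ t * |β (u t)|)) atTop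
        (𝓝 (ENNReal.ofReal (s v))) :=
      (ENNReal.continuous_ofReal.tendsto _).comp hptend
    exact le_of_tendsto h3 (Eventually.of_forall h1)
  refine le_antisymm (iSup_le hupper) ?_
  exact hlower.trans (le_iSup (fun x : ℕ → Sig =>
    ∑' t : ℕ, ENNReal.ofReal (γ ^ t * |β (wordMap τ (strPrefix x t) v)|)) xg)
end
end

section
/- Let A = ⟨Σ, V, α, β, {τ_σ}_{σ∈Σ}⟩ be a weighted finite automaton and let 0 < γ with γ·ρ(A) < 1. Let s_{A,γ} be the unique fixed point of F_{A,γ} on the set of seminorms on V. Then ker(s_{A,γ}) = {v ∈ V : s_{A,γ}(v) = 0} is a linear bisimulation for A, and every linear bisimulation W for A satisfies W ⊆ ker(s_{A,γ}); that is, ker(s_{A,γ}) is the largest linear bisimulation for A. -/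
open Filter Topology ENNReal

noncomputable section

/-- A linear bisimulation for a WFA with final form `β` and transitions `τ`:
a subspace contained in `ker β` and invariant under every `τ_σ`. -/
def IsLinBisim {Sig : Type*} {V : Type*} [AddCommGroup V] [Module ℝ V]
    (β : V →ₗ[ℝ] ℝ) (τ : Sig → V →ₗ[ℝ] V) (W : Submodule ℝ V) : Prop :=
  (∀ v ∈ W, β v = 0) ∧ ∀ σ : Sig, ∀ v ∈ W, τ σ v ∈ W

/-- A seminorm on a finite-dimensional normed space is bounded by a multiple of the norm. -/
lemma seminorm_bound {V : Type*} [NormedAddCommGroup V] [NormedSpace ℝ V]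
    [FiniteDimensional ℝ V] (s : Seminorm ℝ V) : ∃ K : ℝ, 0 ≤ K ∧ ∀ v, s v ≤ K * ‖v‖ := by
  set b := Module.finBasis ℝ V
  have coordC : ∀ i, ∃ C : ℝ, 0 ≤ C ∧ ∀ v, |b.coord i v| ≤ C * ‖v‖ := by
    intro i
    obtain ⟨C, hC⟩ := (LinearMap.toContinuousLinearMap (b.coord i)).bound
    exact ⟨C, hC.1.le, fun v => by simpa using hC.2 v⟩
  choose C hC0 hC using coordC
  refine ⟨∑ i, C i * s (b i),
    Finset.sum_nonneg fun i _ => mul_nonneg (hC0 i) (apply_nonneg s _), fun v => ?_⟩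
  have hv : v = ∑ i, b.repr v i • b i := (b.sum_repr v).symm
  calc s v = s (∑ i, b.repr v i • b i) := by rw [← hv]
    _ ≤ ∑ i, s (b.repr v i • b i) :=
        Finset.le_sum_of_subadditive s (map_zero s).le (map_add_le_add s) _ _
    _ ≤ ∑ i, (C i * s (b i)) * ‖v‖ := by
        refine Finset.sum_le_sum fun i _ => ?_
        rw [map_smul_eq_mul]
        have h1 : ‖b.repr v i‖ ≤ C i * ‖v‖ := by simpa [Module.Basis.coord] using hC i v
        calc ‖b.repr v i‖ * s (b i) ≤ (C i * ‖v‖) * s (b i) :=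
              mul_le_mul_of_nonneg_right h1 (apply_nonneg s _)
          _ = (C i * s (b i)) * ‖v‖ := by ring
    _ = (∑ i, C i * s (b i)) * ‖v‖ := by rw [Finset.sum_mul]

lemma wordMap_ofFn_cons {Sig : Type*} {V : Type*} [AddCommGroup V] [Module ℝ V]
    (τ : Sig → V →ₗ[ℝ] V) {t : ℕ} (σ : Sig) (x : Fin t → Sig) (v : V) :
    wordMap τ (List.ofFn (Fin.cons σ x)) v = wordMap τ (List.ofFn x) (τ σ v) := by
  rw [List.ofFn_cons]
  rfl

/-- norm bound on word maps -/
lemma wordMap_norm_le {Sig : Type*} {V : Type*} [NormedAddCommGroup V] [NormedSpace ℝ V]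
    [FiniteDimensional ℝ V] (τ : Sig → V →ₗ[ℝ] V) {M : ℝ} (hM1 : 1 ≤ M)
    (hM : ∀ σ, ‖LinearMap.toContinuousLinearMap (τ σ)‖ ≤ M) (l : List Sig) :
    ‖LinearMap.toContinuousLinearMap (wordMap τ l)‖ ≤ M ^ l.length := by
  induction l with
  | nil =>
      simp only [wordMap, List.length_nil, pow_zero]
      calc ‖LinearMap.toContinuousLinearMap (LinearMap.id : V →ₗ[ℝ] V)‖
          ≤ 1 := by
            apply ContinuousLinearMap.opNorm_le_bound _ zero_le_one
            intro v; simp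
        _ ≤ 1 := le_refl _
  | cons σ l ih =>
      have key : LinearMap.toContinuousLinearMap (wordMap τ (σ :: l)) =
          (LinearMap.toContinuousLinearMap (wordMap τ l)).comp
            (LinearMap.toContinuousLinearMap (τ σ)) := by
        ext v; rfl
      rw [key, List.length_cons, pow_succ]
      calc ‖(LinearMap.toContinuousLinearMap (wordMap τ l)).comp
            (LinearMap.toContinuousLinearMap (τ σ))‖
          ≤ ‖LinearMap.toContinuousLinearMap (wordMap τ l)‖ *
            ‖LinearMap.toContinuousLinearMap (τ σ)‖ := ContinuousLinearMap.opNorm_comp_le _ _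
        _ ≤ M ^ l.length * M := by
            apply mul_le_mul ih (hM σ) (norm_nonneg _)
            positivity

/-- The kernel of the fixed-point seminorm `s_{A,γ}` is a linear
bisimulation for `A`, and it contains every linear bisimulation for `A`. -/
theorem stmt2 {Sig : Type*} [Fintype Sig] [Nonempty Sig]
    {V : Type*} [NormedAddCommGroup V] [NormedSpace ℝ V] [FiniteDimensional ℝ V]
    (α : V) (β : V →ₗ[ℝ] ℝ) (τ : Sig → V →ₗ[ℝ] V)
    (γ : ℝ) (hγ : 0 < γ) (hρ : γ * jsr τ < 1)
    (s : Seminorm ℝ V) (hs : ∀ v : V, s v = |β v| + γ * ⨆ σ : Sig, s (τ σ v)) :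
    ∃ W : Submodule ℝ V, (∀ v : V, v ∈ W ↔ s v = 0) ∧ IsLinBisim β τ W ∧
      ∀ W' : Submodule ℝ V, IsLinBisim β τ W' → W' ≤ W := by
  classical
  -- the kernel submodule
  refine ⟨{ carrier := {v | s v = 0}
            add_mem' := by
              intro a b (ha : s a = 0) (hb : s b = 0)
              have h1 : s (a + b) ≤ s a + s b := map_add_le_add s a b
              have h2 : 0 ≤ s (a + b) := apply_nonneg s _
              simp only [Set.mem_setOf_eq]
              linarith
            zero_mem' := by simp [Set.mem_setOf_eq]
            smul_mem' := by
              intro c v (hv : s v = 0)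
              simp only [Set.mem_setOf_eq, map_smul_eq_mul, hv, mul_zero] },
      fun v => Iff.rfl, ?_, ?_⟩
  · -- it is a bisimulation
    have key : ∀ v : V, s v = 0 → β v = 0 ∧ ∀ σ, s (τ σ v) = 0 := by
      intro v hv
      have h := hs v
      rw [hv] at h
      have hT0 : ∀ σ, s (τ σ v) ≤ ⨆ σ' : Sig, s (τ σ' v) := fun σ =>
        le_ciSup (f := fun σ' : Sig => s (τ σ' v))
          (Set.Finite.bddAbove (Set.finite_range _)) σ
      have hTnn : 0 ≤ ⨆ σ' : Sig, s (τ σ' v) :=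
        le_trans (apply_nonneg s _) (hT0 (Classical.arbitrary Sig))
      have hβ : |β v| = 0 ∧ γ * (⨆ σ' : Sig, s (τ σ' v)) = 0 := by
        constructor <;> nlinarith [abs_nonneg (β v)]
      have hsup : (⨆ σ' : Sig, s (τ σ' v)) = 0 := by
        rcases mul_eq_zero.mp hβ.2 with h | h
        · exact absurd h (ne_of_gt hγ)
        · exact h
      refine ⟨abs_eq_zero.mp hβ.1, fun σ => le_antisymm ?_ (apply_nonneg s _)⟩
      rw [← hsup]; exact hT0 σ
    exact ⟨fun v hv => (key v hv).1, fun σ v hv => (key v hv).2 σ⟩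
  · -- largest
    intro W' hW' v hv
    show s v = 0
    -- step 1: iterate the fixed point
    have step1 : ∀ t : ℕ, ∀ v ∈ W',
        s v ≤ γ ^ t * ⨆ x : Fin t → Sig, s (wordMap τ (List.ofFn x) v) := by
      intro t
      induction t with
      | zero =>
          intro v _
          have : (⨆ x : Fin 0 → Sig, s (wordMap τ (List.ofFn x) v)) = s v := by
            rw [ciSup_unique]; simp [wordMap]
          rw [this, pow_zero, one_mul]
      | succ t ih =>
          intro v hv
          have hβv : β v = 0 := hW'.1 v hv
          have hEq := hs v
          rw [hβv, abs_zero, zero_add] at hEq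
          set S := ⨆ y : Fin (t + 1) → Sig, s (wordMap τ (List.ofFn y) v) with hS
          have hbddS : BddAbove (Set.range fun y : Fin (t + 1) → Sig =>
              s (wordMap τ (List.ofFn y) v)) := Set.Finite.bddAbove (Set.finite_range _)
          have hterm : ∀ σ : Sig, s (τ σ v) ≤ γ ^ t * S := by
            intro σ
            refine (ih (τ σ v) (hW'.2 σ v hv)).trans ?_
            apply mul_le_mul_of_nonneg_left _ (pow_nonneg hγ.le t)
            apply ciSup_le
            intro x
            rw [← wordMap_ofFn_cons]
            exact le_ciSup hbddS (Fin.cons σ x)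
          have hsup : (⨆ σ : Sig, s (τ σ v)) ≤ γ ^ t * S := ciSup_le hterm
          rw [hEq, pow_succ, mul_comm (γ ^ t) γ, mul_assoc]
          exact mul_le_mul_of_nonneg_left hsup hγ.le
    -- step 2: compare with operator norms
    obtain ⟨K, hK0, hK⟩ := seminorm_bound s
    set N : ℕ → ℝ := fun t =>
      ⨆ x : Fin t → Sig, ‖LinearMap.toContinuousLinearMap (wordMap τ (List.ofFn x))‖ with hN
    have hNnn : ∀ t, 0 ≤ N t := fun t =>
      le_trans (norm_nonneg _)
        (le_ciSup (f := fun x : Fin t → Sig =>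
            ‖LinearMap.toContinuousLinearMap (wordMap τ (List.ofFn x))‖)
          (Set.Finite.bddAbove (Set.finite_range _)) (Classical.arbitrary _))
    have step2 : ∀ t : ℕ, s v ≤ γ ^ t * (N t * (K * ‖v‖)) := by
      intro t
      refine (step1 t v hv).trans ?_
      apply mul_le_mul_of_nonneg_left _ (pow_nonneg hγ.le t)
      apply ciSup_le
      intro x
      calc s (wordMap τ (List.ofFn x) v)
          ≤ K * ‖wordMap τ (List.ofFn x) v‖ := hK _
        _ = K * ‖LinearMap.toContinuousLinearMap (wordMap τ (List.ofFn x)) v‖ := rfl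
        _ ≤ K * (‖LinearMap.toContinuousLinearMap (wordMap τ (List.ofFn x))‖ * ‖v‖) :=
            mul_le_mul_of_nonneg_left (ContinuousLinearMap.le_opNorm _ _) hK0
        _ ≤ K * (N t * ‖v‖) := by
            apply mul_le_mul_of_nonneg_left _ hK0
            exact mul_le_mul_of_nonneg_right
              (le_ciSup (f := fun x : Fin t → Sig =>
                  ‖LinearMap.toContinuousLinearMap (wordMap τ (List.ofFn x))‖)
                (Set.Finite.bddAbove (Set.finite_range _)) x) (norm_nonneg v)
        _ = N t * (K * ‖v‖) := by ring
    -- step 3: boundedness of the jsr sequence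
    set M : ℝ := max 1 (⨆ σ : Sig, ‖LinearMap.toContinuousLinearMap (τ σ)‖) with hM
    have hM1 : 1 ≤ M := le_max_left _ _
    have hMσ : ∀ σ, ‖LinearMap.toContinuousLinearMap (τ σ)‖ ≤ M := fun σ =>
      le_trans (le_ciSup (f := fun σ : Sig => ‖LinearMap.toContinuousLinearMap (τ σ)‖)
        (Set.Finite.bddAbove (Set.finite_range _)) σ) (le_max_right _ _)
    have hNle : ∀ t : ℕ, N t ≤ M ^ t := by
      intro t
      apply ciSup_le
      intro x
      have := wordMap_norm_le τ hM1 hMσ (List.ofFn x)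
      simpa using this
    have hbdd : Filter.IsBoundedUnder (· ≤ ·) Filter.atTop
        (fun t : ℕ => N t ^ ((1 : ℝ) / t)) := by
      apply Filter.isBoundedUnder_of
      refine ⟨M, fun t => ?_⟩
      rcases Nat.eq_zero_or_pos t with rfl | ht
      · simpa using hM1
      · have h1 : N t ^ ((1 : ℝ) / t) ≤ (M ^ t) ^ ((1 : ℝ) / t) :=
          Real.rpow_le_rpow (hNnn t) (hNle t) (by positivity)
        refine h1.trans ?_
        rw [← Real.rpow_natCast M t, ← Real.rpow_mul (by linarith : (0:ℝ) ≤ M)]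
        rw [mul_one_div, div_self (by exact_mod_cast ht.ne' : (t : ℝ) ≠ 0), Real.rpow_one]
    -- choose c
    set ρ := jsr τ with hρdef
    set c : ℝ := max ((ρ + 1 / γ) / 2) (1 / (2 * γ)) with hc
    have hcpos : 0 < c := lt_of_lt_of_le (by positivity) (le_max_right _ _)
    have hργ : ρ < 1 / γ := by
      rw [lt_div_iff₀ hγ]; linarith [hρ]
    have hcρ : ρ < c := lt_of_lt_of_le (by linarith) (le_max_left _ _)
    have hγc : γ * c < 1 := by
      have h1 : (ρ + 1 / γ) / 2 < 1 / γ := by linarith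
      have h2 : 1 / (2 * γ) < 1 / γ := by
        rw [div_lt_div_iff₀ (by positivity) hγ]; nlinarith
      have : c < 1 / γ := max_lt h1 h2
      calc γ * c < γ * (1 / γ) := by exact mul_lt_mul_of_pos_left this hγ
        _ = 1 := by field_simp
    -- eventually N t < c ^ t
    have hev : ∀ᶠ t : ℕ in Filter.atTop, N t ^ ((1 : ℝ) / t) < c :=
      Filter.eventually_lt_of_limsup_lt (by rwa [hρdef] at hcρ) hbdd
    have hev2 : ∀ᶠ t : ℕ in Filter.atTop, N t ≤ c ^ t := by
      filter_upwards [hev, Filter.eventually_ge_atTop 1] with t h ht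
      have htne : (t : ℝ) ≠ 0 := by exact_mod_cast (Nat.one_le_iff_ne_zero.mp ht)
      have h2 : (N t ^ ((1 : ℝ) / t)) ^ (t : ℝ) ≤ c ^ (t : ℝ) :=
        Real.rpow_le_rpow (Real.rpow_nonneg (hNnn t) _) h.le (by positivity)
      rw [← Real.rpow_mul (hNnn t), one_div, inv_mul_cancel₀ htne, Real.rpow_one,
        Real.rpow_natCast] at h2
      exact h2
    -- conclude
    have hfinal : ∀ᶠ t : ℕ in Filter.atTop, s v ≤ (γ * c) ^ t * (K * ‖v‖) := by
      filter_upwards [hev2] with t ht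
      refine (step2 t).trans ?_
      rw [mul_pow, mul_assoc]
      apply mul_le_mul_of_nonneg_left _ (pow_nonneg hγ.le t)
      exact mul_le_mul_of_nonneg_right ht (by positivity)
    have hlim : Filter.Tendsto (fun t : ℕ => (γ * c) ^ t * (K * ‖v‖)) Filter.atTop (nhds 0) := by
      rw [show (0:ℝ) = 0 * (K * ‖v‖) by ring]
      apply Filter.Tendsto.mul_const
      exact tendsto_pow_atTop_nhds_zero_of_lt_one (by positivity) hγc
    have : s v ≤ 0 := ge_of_tendsto hlim hfinal
    exact le_antisymm this (apply_nonneg s v)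
end
end

section
/- Let A = ⟨Σ, V, α, β, {τ_σ}_{σ∈Σ}⟩ be a weighted finite automaton with γ·ρ(A) < 1 for some γ > 0, and let s_{A,γ} be the unique fixed point of F_{A,γ} on the set of seminorms on V. If A is observable, i.e., the only linear bisimulation for A is the trivial subspace {0}, then s_{A,γ} is a norm: s_{A,γ}(v) = 0 implies v = 0. -/
open Filter Topology ENNReal

noncomputable section

/-- If `A` is observable (the only linear bisimulation is `{0}`),
then the fixed-point seminorm `s_{A,γ}` is a norm. -/
theorem stmt3 {Sig : Type*} [Fintype Sig] [Nonempty Sig]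
    {V : Type*} [NormedAddCommGroup V] [NormedSpace ℝ V] [FiniteDimensional ℝ V]
    (α : V) (β : V →ₗ[ℝ] ℝ) (τ : Sig → V →ₗ[ℝ] V)
    (γ : ℝ) (hγ : 0 < γ) (hρ : γ * jsr τ < 1)
    (s : Seminorm ℝ V) (hs : ∀ v : V, s v = |β v| + γ * ⨆ σ : Sig, s (τ σ v))
    (hobs : ∀ W : Submodule ℝ V, IsLinBisim β τ W → W = ⊥) :
    ∀ v : V, s v = 0 → v = 0 := by
  classical
  let W : Submodule ℝ V :=
    { carrier := {v | s v = 0}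
      add_mem' := by
        intro a b ha hb
        simp only [Set.mem_setOf_eq] at *
        have h1 := map_add_le_add s a b
        have h0 := apply_nonneg s (a + b)
        linarith
      zero_mem' := by simp [Set.mem_setOf_eq, map_zero]
      smul_mem' := by
        intro c v hv
        simp only [Set.mem_setOf_eq] at *
        rw [map_smul_eq_mul, hv, mul_zero] }
  have key : ∀ v ∈ W, β v = 0 ∧ ∀ σ, τ σ v ∈ W := by
    intro v hv
    have hv' : s v = 0 := hv
    rw [hs v] at hv'
    have hsup : ∀ σ, s (τ σ v) ≤ ⨆ σ, s (τ σ v) :=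
      fun σ => le_ciSup (f := fun σ => s (τ σ v)) (Set.Finite.bddAbove (Set.finite_range _)) σ
    have σ0 : Sig := Classical.arbitrary Sig
    have h1 : 0 ≤ ⨆ σ, s (τ σ v) := le_trans (apply_nonneg s _) (hsup σ0)
    have hb1 : |β v| = 0 := by nlinarith [abs_nonneg (β v)]
    have hb2 : (⨆ σ, s (τ σ v)) = 0 := by nlinarith [abs_nonneg (β v)]
    refine ⟨abs_eq_zero.mp hb1, fun σ => ?_⟩
    have h2 := hsup σ
    have h3 := apply_nonneg s (τ σ v)
    show s (τ σ v) = 0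
    rw [hb2] at h2
    linarith
  have hbis : IsLinBisim β τ W := ⟨fun v hv => (key v hv).1, fun σ v hv => (key v hv).2 σ⟩
  have hbot := hobs W hbis
  intro v hv
  have hvW : v ∈ W := hv
  rw [hbot] at hvW
  simpa using hvW
end
end

section
/- Let (A_i)_{i∈ℕ} be a sequence of weighted finite automata A_i = ⟨Σ, V, α_i, β_i, {τ_{i,σ}}⟩ over the same alphabet Σ and the same finite-dimensional normed real vector space (V, ‖·‖), converging to a WFA A = ⟨Σ, V, α, β, {τ_σ}⟩ in the sense that ‖α_i − α‖ → 0, ‖β_i − β‖_* → 0, and ‖τ_{i,σ} − τ_σ‖ → 0 for every σ ∈ Σ. If γ > 0 satisfies γ·ρ(A) < 1, then lim_{i→∞} d_γ(A, A_i) = 0, where d_γ(A, A_i) := sup_{x∈Σ^∞} Σ_{t=0}^∞ γ^t |f_A(x_{≤t}) − f_{A_i}(x_{≤t})| (a value in [0,∞]). -/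
set_option maxHeartbeats 1000000


open Filter Topology ENNReal

noncomputable section

namespace Stmt8Aux

variable {Sig : Type*} {V : Type*} [NormedAddCommGroup V] [NormedSpace ℝ V]
  [FiniteDimensional ℝ V]

/-- operator norm of a linear map out of a fin.dim. space -/
def nL {W : Type*} [NormedAddCommGroup W] [NormedSpace ℝ W] (f : V →ₗ[ℝ] W) : ℝ :=
  ‖LinearMap.toContinuousLinearMap f‖

lemma nL_nonneg {W : Type*} [NormedAddCommGroup W] [NormedSpace ℝ W] (f : V →ₗ[ℝ] W) :
    0 ≤ nL f := norm_nonneg _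

lemma apply_le {W : Type*} [NormedAddCommGroup W] [NormedSpace ℝ W] (f : V →ₗ[ℝ] W) (v : V) :
    ‖f v‖ ≤ nL f * ‖v‖ := by
  simpa [nL] using (LinearMap.toContinuousLinearMap f).le_opNorm v

lemma apply_le' (f : V →ₗ[ℝ] ℝ) (v : V) : |f v| ≤ nL f * ‖v‖ := by
  simpa [Real.norm_eq_abs] using apply_le f v

lemma nL_comp {W : Type*} [NormedAddCommGroup W] [NormedSpace ℝ W]
    (f : V →ₗ[ℝ] W) (g : V →ₗ[ℝ] V) : nL (f.comp g) ≤ nL f * nL g := by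
  have h : LinearMap.toContinuousLinearMap (f.comp g)
      = (LinearMap.toContinuousLinearMap f).comp (LinearMap.toContinuousLinearMap g) := by
    ext v; simp
  rw [nL, h]
  exact ContinuousLinearMap.opNorm_comp_le _ _

lemma nL_id : nL (LinearMap.id (R := ℝ) (M := V)) ≤ 1 := by
  have h : LinearMap.toContinuousLinearMap (LinearMap.id (R := ℝ) (M := V))
      = ContinuousLinearMap.id ℝ V := by ext v; simp
  rw [nL, h]; exact ContinuousLinearMap.norm_id_le

lemma nL_add {W : Type*} [NormedAddCommGroup W] [NormedSpace ℝ W] (f g : V →ₗ[ℝ] W) :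
    nL (f + g) ≤ nL f + nL g := by
  rw [nL, map_add]; exact norm_add_le _ _

lemma nL_sub_rev {W : Type*} [NormedAddCommGroup W] [NormedSpace ℝ W] (f g : V →ₗ[ℝ] W) :
    nL (f - g) = nL (g - f) := by
  rw [nL, nL, map_sub, map_sub, norm_sub_rev]

lemma nL_zero {W : Type*} [NormedAddCommGroup W] [NormedSpace ℝ W] :
    nL (0 : V →ₗ[ℝ] W) = 0 := by rw [nL, map_zero, norm_zero]

lemma wordMap_append (τ : Sig → V →ₗ[ℝ] V) (u v : List Sig) :
    wordMap τ (u ++ v) = (wordMap τ v).comp (wordMap τ u) := by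
  induction u with
  | nil => simp [wordMap]
  | cons σ u ih => simp [wordMap, ih, LinearMap.comp_assoc]

lemma norm_wordMap_le (τ : Sig → V →ₗ[ℝ] V) {M : ℝ} (hM0 : 0 ≤ M)
    (hM : ∀ σ, nL (τ σ) ≤ M) : ∀ x : List Sig, nL (wordMap τ x) ≤ M ^ x.length := by
  intro x
  induction x with
  | nil => simpa [wordMap] using nL_id
  | cons σ x ih =>
      calc nL (wordMap τ (σ :: x)) ≤ nL (wordMap τ x) * nL (τ σ) := nL_comp _ _
        _ ≤ M ^ x.length * M :=
          mul_le_mul ih (hM σ) (nL_nonneg _) (le_trans (nL_nonneg _) ih)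
        _ = M ^ (σ :: x).length := by rw [List.length_cons, pow_succ]

lemma diff_crude (τ τ' : Sig → V →ₗ[ℝ] V) {M c : ℝ} (hM0 : 0 ≤ M)
    (hM : ∀ σ, nL (τ σ) ≤ M) (hc0 : 0 ≤ c) (hc1 : c ≤ 1)
    (hc : ∀ σ, nL (τ' σ - τ σ) ≤ c) :
    ∀ x : List Sig, nL (wordMap τ' x - wordMap τ x) ≤ c * x.length * (M + 1) ^ x.length := by
  have hM' : ∀ σ, nL (τ' σ) ≤ M + 1 := by
    intro σ
    have : τ' σ = τ σ + (τ' σ - τ σ) := by abel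
    rw [this]
    calc nL (τ σ + (τ' σ - τ σ)) ≤ nL (τ σ) + nL (τ' σ - τ σ) := nL_add _ _
      _ ≤ M + 1 := add_le_add (hM σ) (le_trans (hc σ) hc1)
  intro x
  induction x with
  | nil => simp [wordMap, nL_zero]
  | cons σ x ih =>
      have hdec : wordMap τ' (σ :: x) - wordMap τ (σ :: x)
          = (wordMap τ' x).comp (τ' σ - τ σ) + (wordMap τ' x - wordMap τ x).comp (τ σ) := by
        simp only [wordMap, LinearMap.comp_sub, LinearMap.sub_comp]
        abel
      have h1 : nL ((wordMap τ' x).comp (τ' σ - τ σ)) ≤ (M + 1) ^ x.length * c := by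
        calc nL ((wordMap τ' x).comp (τ' σ - τ σ)) ≤ nL (wordMap τ' x) * nL (τ' σ - τ σ) :=
              nL_comp _ _
          _ ≤ (M + 1) ^ x.length * c :=
              mul_le_mul (norm_wordMap_le τ' (by linarith) hM' x) (hc σ) (nL_nonneg _)
                (by positivity)
      have h2 : nL ((wordMap τ' x - wordMap τ x).comp (τ σ))
          ≤ (c * x.length * (M + 1) ^ x.length) * M := by
        calc nL ((wordMap τ' x - wordMap τ x).comp (τ σ))
            ≤ nL (wordMap τ' x - wordMap τ x) * nL (τ σ) := nL_comp _ _
          _ ≤ (c * x.length * (M + 1) ^ x.length) * M :=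
              mul_le_mul ih (hM σ) (nL_nonneg _) (by positivity)
      calc nL (wordMap τ' (σ :: x) - wordMap τ (σ :: x))
          ≤ nL ((wordMap τ' x).comp (τ' σ - τ σ))
            + nL ((wordMap τ' x - wordMap τ x).comp (τ σ)) := by rw [hdec]; exact nL_add _ _
        _ ≤ (M + 1) ^ x.length * c + (c * x.length * (M + 1) ^ x.length) * M := add_le_add h1 h2
        _ ≤ c * (σ :: x).length * (M + 1) ^ (σ :: x).length := by
            rw [List.length_cons, pow_succ]
            have hp : (0:ℝ) ≤ (M + 1) ^ x.length := by positivity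
            have hl : (0:ℝ) ≤ (x.length : ℝ) := Nat.cast_nonneg _
            push_cast
            nlinarith [mul_nonneg (mul_nonneg hc0 hp) hl, mul_nonneg (mul_nonneg hc0 hp) hM0]


lemma key {Sig : Type*} [Fintype Sig] [Nonempty Sig] {V : Type*} [NormedAddCommGroup V]
    [NormedSpace ℝ V] [FiniteDimensional ℝ V]
    (τ : Sig → V →ₗ[ℝ] V) (γ : ℝ) (hγ : 0 < γ) (hρ : γ * jsr τ < 1) :
    ∃ θ' C' δ : ℝ, 0 < θ' ∧ γ * θ' < 1 ∧ 0 ≤ C' ∧ 0 < δ ∧ δ ≤ 1 ∧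
      ∀ (τ' : Sig → V →ₗ[ℝ] V) (c : ℝ), 0 ≤ c → c ≤ δ →
        (∀ σ, nL (τ' σ - τ σ) ≤ c) →
        (∀ x : List Sig, nL (wordMap τ' x) ≤ C' * θ' ^ x.length) ∧
        (∀ x : List Sig, nL (wordMap τ' x - wordMap τ x)
            ≤ c * C' ^ 2 * x.length * θ' ^ x.length / θ') := by
  classical
  set M : ℝ := ⨆ σ : Sig, nL (τ σ) with hMdef
  have hMb : ∀ σ, nL (τ σ) ≤ M :=
    fun σ => le_ciSup (f := fun σ => nL (τ σ)) (Set.Finite.bddAbove (Set.finite_range _)) σ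
  have hM0 : 0 ≤ M := le_trans (nL_nonneg _) (hMb (Classical.arbitrary Sig))
  set M₁ : ℝ := max M 1 with hM₁def
  have hM₁1 : 1 ≤ M₁ := le_max_right _ _
  have hM₁0 : 0 ≤ M₁ := by linarith
  have hM₁b : ∀ σ, nL (τ σ) ≤ M₁ := fun σ => (hMb σ).trans (le_max_left _ _)
  set S : ℕ → ℝ := fun t => ⨆ x : Fin t → Sig, nL (wordMap τ (List.ofFn x)) with hSdef
  have hS0 : ∀ t, 0 ≤ S t := fun t => Real.iSup_nonneg fun _ => nL_nonneg _
  have hS_le : ∀ t, S t ≤ M₁ ^ t := fun t => ciSup_le fun x => by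
    simpa [List.length_ofFn] using norm_wordMap_le τ hM₁0 hM₁b (List.ofFn x)
  have hSx : ∀ x : List Sig, nL (wordMap τ x) ≤ S x.length := by
    intro x
    have h := le_ciSup (f := fun y : Fin x.length → Sig => nL (wordMap τ (List.ofFn y)))
      (Set.Finite.bddAbove (Set.finite_range _)) (fun i => x.get i)
    simpa [List.ofFn_get] using h
  set u : ℕ → ℝ := fun t => S t ^ ((1:ℝ)/t) with hudef
  have hju : jsr τ = limsup u atTop := rfl
  have hub : ∀ t, u t ≤ M₁ := by
    intro t
    rcases Nat.eq_zero_or_pos t with rfl | ht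
    · simpa [hudef] using hM₁1
    · have ht0 : (t:ℝ) ≠ 0 := Nat.cast_ne_zero.mpr (by omega)
      have h1 : S t ^ ((1:ℝ)/t) ≤ (M₁ ^ t) ^ ((1:ℝ)/t) :=
        Real.rpow_le_rpow (hS0 t) (hS_le t) (by positivity)
      have h2 : (M₁ ^ t : ℝ) ^ ((1:ℝ)/t) = M₁ := by
        rw [← Real.rpow_natCast M₁ t, ← Real.rpow_mul hM₁0]
        rw [mul_one_div, div_self ht0, Real.rpow_one]
      exact h1.trans_eq h2
  have hbdd : IsBoundedUnder (· ≤ ·) atTop u := isBoundedUnder_of ⟨M₁, hub⟩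
  have hjsr0 : 0 ≤ jsr τ := by
    rw [hju]
    exact le_limsup_of_frequently_le
      (Frequently.of_forall fun t => Real.rpow_nonneg (hS0 t) _) hbdd
  have hγ' : 0 < 1/γ := by positivity
  have hjγ : jsr τ < 1/γ := by rw [lt_div_iff₀ hγ, mul_comm]; exact hρ
  set θ : ℝ := (jsr τ + 1/γ)/2 with hθdef
  have hθ0 : 0 < θ := by rw [hθdef]; linarith
  have hθl : jsr τ < θ := by rw [hθdef]; linarith
  have hθu : θ < 1/γ := by rw [hθdef]; linarith
  set θ' : ℝ := (θ + 1/γ)/2 with hθ'def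
  have hθ'0 : 0 < θ' := by rw [hθ'def]; linarith
  have hθθ' : θ < θ' := by rw [hθ'def]; linarith
  have hθ'u : θ' < 1/γ := by rw [hθ'def]; linarith
  have hγθ' : γ * θ' < 1 := by rw [mul_comm]; exact (lt_div_iff₀ hγ).mp hθ'u
  have hev : ∀ᶠ t in atTop, u t < θ := by
    apply eventually_lt_of_limsup_lt _ hbdd
    rw [← hju]; exact hθl
  obtain ⟨N₀, hN₀⟩ := eventually_atTop.mp hev
  set N₁ : ℕ := max N₀ 1 with hN₁def
  have hSθ : ∀ t, N₁ ≤ t → S t ≤ θ ^ t := by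
    intro t ht
    have ht1 : 1 ≤ t := le_trans (le_max_right _ _) ht
    have ht0 : (t:ℝ) ≠ 0 := Nat.cast_ne_zero.mpr (by omega)
    have h1 : u t < θ := hN₀ t (le_trans (le_max_left _ _) ht)
    have hst : S t = (u t) ^ t := by
      rw [hudef]
      rw [← Real.rpow_natCast (S t ^ ((1:ℝ)/t)) t, ← Real.rpow_mul (hS0 t)]
      rw [one_div, inv_mul_cancel₀ ht0, Real.rpow_one]
    rw [hst]
    exact pow_le_pow_left₀ (Real.rpow_nonneg (hS0 t) _) h1.le t
  set θ₀ : ℝ := min θ 1 with hθ₀def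
  have hθ₀0 : 0 < θ₀ := lt_min hθ0 one_pos
  have hθ₀1 : θ₀ ≤ 1 := min_le_right _ _
  set C : ℝ := M₁ ^ N₁ / θ₀ ^ N₁ with hCdef
  have hC1 : 1 ≤ C := by
    rw [hCdef, le_div_iff₀ (by positivity), one_mul]
    exact pow_le_pow_left₀ hθ₀0.le (hθ₀1.trans hM₁1) N₁
  have hC0 : 0 < C := lt_of_lt_of_le one_pos hC1
  have hCθ : ∀ x : List Sig, nL (wordMap τ x) ≤ C * θ ^ x.length := by
    intro x
    rcases le_or_gt N₁ x.length with h | h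
    · refine (hSx x).trans ((hSθ _ h).trans ?_)
      exact le_mul_of_one_le_left (by positivity) hC1
    · have h1 : S x.length ≤ M₁ ^ N₁ := (hS_le _).trans (pow_le_pow_right₀ hM₁1 h.le)
      have h2 : θ₀ ^ N₁ ≤ θ ^ x.length :=
        le_trans (pow_le_pow_of_le_one hθ₀0.le hθ₀1 h.le)
          (pow_le_pow_left₀ hθ₀0.le (min_le_left _ _) _)
      have h3 : M₁ ^ N₁ = C * θ₀ ^ N₁ := by
        rw [hCdef, div_mul_cancel₀]; positivity
      refine (hSx x).trans (h1.trans ?_)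
      rw [h3]
      exact mul_le_mul_of_nonneg_left h2 hC0.le
  -- choose the block length N
  have hr1 : θ / θ' < 1 := (div_lt_one hθ'0).mpr hθθ'
  have hr0 : 0 ≤ θ / θ' := by positivity
  have htd : Tendsto (fun n : ℕ => C * (θ/θ')^n) atTop (𝓝 0) := by
    simpa using (tendsto_pow_atTop_nhds_zero_of_lt_one hr0 hr1).const_mul C
  have hev2 : ∀ᶠ n : ℕ in atTop, C * (θ/θ')^n < 1/2 :=
    htd.eventually_lt_const (by norm_num)
  obtain ⟨N, hNb, hN1⟩ : ∃ N : ℕ, C * (θ/θ')^N < 1/2 ∧ 1 ≤ N :=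
    (hev2.and (eventually_ge_atTop 1)).exists
  have hN0 : (0:ℝ) < (N:ℝ) := by exact_mod_cast hN1
  have hCθN : C * θ ^ N ≤ θ' ^ N / 2 := by
    have h := mul_le_mul_of_nonneg_right hNb.le (le_of_lt (pow_pos hθ'0 N))
    have he : C * (θ/θ')^N * θ'^N = C * θ^N := by
      rw [div_pow]
      field_simp
    rw [he] at h
    linarith [h]
  set δ : ℝ := min 1 (θ' ^ N / (2 * N * (M+1) ^ N)) with hδdef
  have hden : (0:ℝ) < 2 * N * (M+1)^N := by positivity
  have hδ0 : 0 < δ := lt_min one_pos (div_pos (pow_pos hθ'0 N) hden)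
  have hδ1 : δ ≤ 1 := min_le_left _ _
  set m : ℝ := min θ' 1 with hmdef
  have hm0 : 0 < m := lt_min hθ'0 one_pos
  have hm1 : m ≤ 1 := min_le_right _ _
  set C' : ℝ := (M+1)^N / m^N with hC'def
  have hC'0 : 0 ≤ C' := by positivity
  refine ⟨θ', C', δ, hθ'0, hγθ', hC'0, hδ0, hδ1, ?_⟩
  have partA : ∀ (τ' : Sig → V →ₗ[ℝ] V) (c : ℝ), 0 ≤ c → c ≤ δ →
      (∀ σ, nL (τ' σ - τ σ) ≤ c) →
      ∀ x : List Sig, nL (wordMap τ' x) ≤ C' * θ' ^ x.length := by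
    intro τ' c hc0 hcδ hcb
    have hc1 : c ≤ 1 := hcδ.trans hδ1
    have hτ'b : ∀ σ, nL (τ' σ) ≤ M + 1 := by
      intro σ
      have he : τ' σ = τ σ + (τ' σ - τ σ) := by abel
      rw [he]
      calc nL (τ σ + (τ' σ - τ σ)) ≤ nL (τ σ) + nL (τ' σ - τ σ) := nL_add _ _
        _ ≤ M + 1 := add_le_add (hMb σ) ((hcb σ).trans hc1)
    suffices h : ∀ t, ∀ x : List Sig, x.length = t → nL (wordMap τ' x) ≤ C' * θ' ^ t by
      intro x; exact h x.length x rfl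
    intro t
    induction t using Nat.strong_induction_on with
    | _ t ih =>
      intro x hx
      rcases lt_or_ge t N with h | h
      · have h1 : nL (wordMap τ' x) ≤ (M+1)^t := by
          rw [← hx]; exact norm_wordMap_le τ' (by linarith) hτ'b x
        refine h1.trans ?_
        rw [hC'def, div_mul_eq_mul_div, le_div_iff₀ (by positivity)]
        have e1 : (M+1)^t ≤ (M+1)^N := pow_le_pow_right₀ (by linarith) h.le
        have e2 : m^N ≤ θ'^t :=
          le_trans (pow_le_pow_of_le_one hm0.le hm1 h.le)
            (pow_le_pow_left₀ hm0.le (min_le_left _ _) t)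
        exact mul_le_mul e1 e2 (by positivity) (by positivity)
      · have hxx : x = x.take N ++ x.drop N := (List.take_append_drop N x).symm
        have hlt : (x.take N).length = N := by rw [List.length_take]; omega
        have hld : (x.drop N).length = t - N := by rw [List.length_drop]; omega
        have hB1 : nL (wordMap τ' (x.take N)) ≤ θ' ^ N := by
          have hdd : nL (wordMap τ' (x.take N) - wordMap τ (x.take N)) ≤ c * N * (M+1)^N := by
            have := diff_crude τ τ' hM0 hMb hc0 hc1 hcb (x.take N)
            rwa [hlt] at this
          have heq : wordMap τ' (x.take N)
              = wordMap τ (x.take N) + (wordMap τ' (x.take N) - wordMap τ (x.take N)) := by abel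
          have htri : nL (wordMap τ' (x.take N)) ≤ nL (wordMap τ (x.take N))
              + nL (wordMap τ' (x.take N) - wordMap τ (x.take N)) := by
            conv_lhs => rw [heq]
            exact nL_add _ _
          have hw : nL (wordMap τ (x.take N)) ≤ C * θ^N := by
            have := hCθ (x.take N); rwa [hlt] at this
          have hc2 : c * N * (M+1)^N ≤ θ'^N / 2 := by
            have hδ2 : c ≤ θ'^N/(2*N*(M+1)^N) := hcδ.trans (min_le_right _ _)
            rw [le_div_iff₀ hden] at hδ2
            nlinarith [hδ2]
          linarith [htri, hw, hCθN, hdd, hc2]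
        have hB2 : nL (wordMap τ' (x.drop N)) ≤ C' * θ' ^ (t - N) :=
          ih (t-N) (by omega) _ hld
        calc nL (wordMap τ' x)
            = nL ((wordMap τ' (x.drop N)).comp (wordMap τ' (x.take N))) := by
              conv_lhs => rw [hxx, wordMap_append]
          _ ≤ nL (wordMap τ' (x.drop N)) * nL (wordMap τ' (x.take N)) := nL_comp _ _
          _ ≤ (C' * θ'^(t-N)) * θ'^N :=
              mul_le_mul hB2 hB1 (nL_nonneg _) (by positivity)
          _ = C' * θ'^t := by rw [mul_assoc, ← pow_add, Nat.sub_add_cancel h]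
  intro τ' c hc0 hcδ hcb
  refine ⟨partA τ' c hc0 hcδ hcb, ?_⟩
  have hAτ : ∀ x : List Sig, nL (wordMap τ x) ≤ C' * θ' ^ x.length :=
    partA τ 0 le_rfl hδ0.le (fun σ => by simp [nL_zero])
  have hAτ' := partA τ' c hc0 hcδ hcb
  have hBgen : ∀ (x w : List Sig),
      nL ((wordMap τ' x).comp (wordMap τ' w) - (wordMap τ x).comp (wordMap τ' w))
        ≤ c * C'^2 * x.length * θ' ^ (x.length + w.length) / θ' := by
    intro x
    induction x with
    | nil =>
        intro w
        simp [wordMap, nL_zero]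
    | cons σ y ih =>
        intro w
        have hid : wordMap τ' (w ++ [σ]) = (τ' σ).comp (wordMap τ' w) := by
          rw [wordMap_append]; simp [wordMap]
        have hdec : (wordMap τ' (σ::y)).comp (wordMap τ' w)
              - (wordMap τ (σ::y)).comp (wordMap τ' w)
            = ((wordMap τ' y).comp (wordMap τ' (w ++ [σ]))
                - (wordMap τ y).comp (wordMap τ' (w ++ [σ])))
              + (wordMap τ y).comp ((τ' σ - τ σ).comp (wordMap τ' w)) := by
          rw [hid]
          simp only [wordMap, LinearMap.comp_sub, LinearMap.sub_comp, LinearMap.comp_assoc]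
          abel
        have h1 := ih (w ++ [σ])
        have h2 : nL ((wordMap τ y).comp ((τ' σ - τ σ).comp (wordMap τ' w)))
            ≤ (C' * θ'^y.length) * (c * (C' * θ'^w.length)) := by
          calc nL ((wordMap τ y).comp ((τ' σ - τ σ).comp (wordMap τ' w)))
              ≤ nL (wordMap τ y) * nL ((τ' σ - τ σ).comp (wordMap τ' w)) := nL_comp _ _
            _ ≤ (C' * θ'^y.length) * (c * (C' * θ'^w.length)) := by
                refine mul_le_mul (hAτ y) ?_ (nL_nonneg _) (by positivity)
                calc nL ((τ' σ - τ σ).comp (wordMap τ' w))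
                    ≤ nL (τ' σ - τ σ) * nL (wordMap τ' w) := nL_comp _ _
                  _ ≤ c * (C' * θ'^w.length) :=
                      mul_le_mul (hcb σ) (hAτ' w) (nL_nonneg _) hc0
        have hθ'ne : θ' ≠ 0 := ne_of_gt hθ'0
        calc nL ((wordMap τ' (σ::y)).comp (wordMap τ' w)
              - (wordMap τ (σ::y)).comp (wordMap τ' w))
            ≤ nL ((wordMap τ' y).comp (wordMap τ' (w ++ [σ]))
                - (wordMap τ y).comp (wordMap τ' (w ++ [σ])))
              + nL ((wordMap τ y).comp ((τ' σ - τ σ).comp (wordMap τ' w))) := by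
              rw [hdec]; exact nL_add _ _
          _ ≤ c * C'^2 * y.length * θ' ^ (y.length + (w.length + 1)) / θ'
              + (C' * θ'^y.length) * (c * (C' * θ'^w.length)) := by
              refine add_le_add ?_ h2
              simpa [List.length_append] using h1
          _ = c * C'^2 * (σ::y).length * θ' ^ ((σ::y).length + w.length) / θ' := by
              rw [List.length_cons]
              push_cast
              have e1 : θ' ^ (y.length + (w.length + 1)) = θ' ^ (y.length + w.length) * θ' := by
                rw [show y.length + (w.length + 1) = (y.length + w.length) + 1 by omega, pow_succ]
              have e2 : θ' ^ (y.length + 1 + w.length) = θ' ^ (y.length + w.length) * θ' := by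
                rw [show y.length + 1 + w.length = (y.length + w.length) + 1 by omega, pow_succ]
              rw [e1, e2]
              have e3 : θ' ^ y.length * θ' ^ w.length = θ' ^ (y.length + w.length) := by
                rw [pow_add]
              field_simp
              ring
  intro x
  have h := hBgen x []
  have hempty : wordMap τ' ([] : List Sig) = LinearMap.id := rfl
  rw [hempty] at h
  simpa [LinearMap.comp_id] using h

end Stmt8Aux

open Stmt8Aux in
/-- **parameter continuity.** If the weights of `A_i` converge to those of
`A` (in norm, dual norm, and operator norm respectively) and `γ·ρ(A) < 1`, then
`d_γ(A, A_i) → 0`, where `d_γ` takes values in `[0,∞]`. -/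
theorem stmt8 {Sig : Type*} [Fintype Sig] [Nonempty Sig]
    {V : Type*} [NormedAddCommGroup V] [NormedSpace ℝ V] [FiniteDimensional ℝ V]
    (αi : ℕ → V) (βi : ℕ → V →ₗ[ℝ] ℝ) (τi : ℕ → Sig → V →ₗ[ℝ] V)
    (α : V) (β : V →ₗ[ℝ] ℝ) (τ : Sig → V →ₗ[ℝ] V)
    (hα : Tendsto (fun i => ‖αi i - α‖) atTop (𝓝 0))
    (hβ : Tendsto (fun i => ‖LinearMap.toContinuousLinearMap (βi i - β)‖) atTop (𝓝 0))
    (hτ : ∀ σ : Sig,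
      Tendsto (fun i => ‖LinearMap.toContinuousLinearMap (τi i σ - τ σ)‖) atTop (𝓝 0))
    (γ : ℝ) (hγ : 0 < γ) (hρ : γ * jsr τ < 1) :
    Tendsto (fun i => ⨆ x : ℕ → Sig, ∑' t : ℕ,
        ENNReal.ofReal (γ ^ t * |β (wordMap τ (strPrefix x t) α) -
          βi i (wordMap (τi i) (strPrefix x t) (αi i))|))
      atTop (𝓝 (0 : ℝ≥0∞)) := by
  classical
  obtain ⟨θ', C', δ, hθ'0, hγθ', hC'0, hδ0, hδ1, hkey⟩ := Stmt8Aux.key τ γ hγ hρ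
  set Nβ : ℝ := nL β with hNβdef
  have hNβ0 : 0 ≤ Nβ := nL_nonneg _
  set e : ℕ → ℝ := fun i => ‖αi i - α‖ + nL (βi i - β) + ∑ σ : Sig, nL (τi i σ - τ σ)
    with hedef
  have he : Tendsto e atTop (𝓝 0) := by
    rw [hedef]
    have h3 : Tendsto (fun i => ∑ σ : Sig, nL (τi i σ - τ σ)) atTop (𝓝 0) := by
      have := tendsto_finset_sum (Finset.univ : Finset Sig) (fun σ _ => hτ σ)
      simpa [nL] using this
    have := (hα.add hβ).add h3
    simpa [nL] using this
  have he0 : ∀ i, 0 ≤ e i := fun i =>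
    add_nonneg (add_nonneg (norm_nonneg _) (nL_nonneg _))
      (Finset.sum_nonneg fun _ _ => nL_nonneg _)
  have hea : ∀ i, ‖αi i - α‖ ≤ e i := fun i => by
    rw [hedef]
    have : (0:ℝ) ≤ nL (βi i - β) + ∑ σ : Sig, nL (τi i σ - τ σ) :=
      add_nonneg (nL_nonneg _) (Finset.sum_nonneg fun _ _ => nL_nonneg _)
    dsimp only
    linarith
  have heb : ∀ i, nL (βi i - β) ≤ e i := fun i => by
    rw [hedef]
    have : (0:ℝ) ≤ ∑ σ : Sig, nL (τi i σ - τ σ) :=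
      Finset.sum_nonneg fun _ _ => nL_nonneg _
    have h2 : (0:ℝ) ≤ ‖αi i - α‖ := norm_nonneg _
    dsimp only
    linarith
  have hec : ∀ i σ, nL (τi i σ - τ σ) ≤ e i := fun i σ => by
    rw [hedef]
    have h1 : nL (τi i σ - τ σ) ≤ ∑ σ' : Sig, nL (τi i σ' - τ σ') :=
      Finset.single_le_sum (f := fun σ' => nL (τi i σ' - τ σ'))
        (fun _ _ => nL_nonneg _) (Finset.mem_univ σ)
    have h2 : (0:ℝ) ≤ ‖αi i - α‖ := norm_nonneg _
    have h3 : (0:ℝ) ≤ nL (βi i - β) := nL_nonneg _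
    dsimp only
    linarith
  set r : ℝ := γ * θ' with hrdef
  have hr0 : 0 ≤ r := mul_nonneg hγ.le hθ'0.le
  have hr1 : r < 1 := hγθ'
  set A : ℝ := Nβ * C' ^ 2 * ‖α‖ / θ' with hAdef
  have hA0 : 0 ≤ A := div_nonneg (by positivity) hθ'0.le
  set B : ℝ := Nβ * C' + C' * (‖α‖ + 1) with hBdef
  have hB0 : 0 ≤ B := by positivity
  set h : ℕ → ℝ := fun t => A * (t * r ^ t) + B * r ^ t with hhdef
  have hh0 : ∀ t, 0 ≤ h t := fun t =>
    add_nonneg (mul_nonneg hA0 (mul_nonneg (Nat.cast_nonneg _) (pow_nonneg hr0 _)))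
      (mul_nonneg hB0 (pow_nonneg hr0 _))
  have hsum : Summable h := by
    have hs1 : Summable (fun t : ℕ => (t : ℝ) * r ^ t) := by
      have := summable_pow_mul_geometric_of_norm_lt_one 1 (r := r)
        (by rwa [Real.norm_eq_abs, abs_of_nonneg hr0])
      simpa using this
    have hs2 : Summable (fun t : ℕ => r ^ t) := summable_geometric_of_lt_one hr0 hr1
    exact (hs1.mul_left A).add (hs2.mul_left B)
  set K : ℝ := ∑' t, h t with hKdef
  have hev : ∀ᶠ i in atTop, e i < δ := he.eventually_lt_const hδ0
  have hub : ∀ᶠ i in atTop, (⨆ x : ℕ → Sig, ∑' t : ℕ,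
      ENNReal.ofReal (γ ^ t * |β (wordMap τ (strPrefix x t) α) -
        βi i (wordMap (τi i) (strPrefix x t) (αi i))|)) ≤ ENNReal.ofReal (e i * K) := by
    filter_upwards [hev] with i hi
    obtain ⟨hgA, hgB⟩ := hkey (τi i) (e i) (he0 i) hi.le (hec i)
    refine iSup_le fun x => ?_
    have hpt : ∀ t : ℕ, γ ^ t * |β (wordMap τ (strPrefix x t) α) -
        βi i (wordMap (τi i) (strPrefix x t) (αi i))| ≤ e i * h t := by
      intro t
      set L : List Sig := strPrefix x t with hLdef
      have hL : L.length = t := by simp [hLdef, strPrefix]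
      set P : V →ₗ[ℝ] V := wordMap τ L with hPdef
      set P' : V →ₗ[ℝ] V := wordMap (τi i) L with hP'def
      have hγt : (0:ℝ) ≤ γ ^ t := pow_nonneg hγ.le t
      have hθt : (0:ℝ) ≤ θ' ^ t := pow_nonneg hθ'0.le t
      have hnP' : nL P' ≤ C' * θ' ^ t := by have := hgA L; rwa [hL] at this
      have hT1 : |β (P α) - β (P' α)| ≤ Nβ * (e i * C' ^ 2 * t * θ' ^ t / θ' * ‖α‖) := by
        have heq : β (P α) - β (P' α) = β ((P - P') α) := by
          rw [LinearMap.sub_apply, map_sub]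
        rw [heq]
        calc |β ((P - P') α)| ≤ Nβ * ‖(P - P') α‖ := apply_le' β _
          _ ≤ Nβ * (nL (P - P') * ‖α‖) :=
              mul_le_mul_of_nonneg_left (apply_le _ _) hNβ0
          _ ≤ Nβ * (e i * C' ^ 2 * t * θ' ^ t / θ' * ‖α‖) := by
              refine mul_le_mul_of_nonneg_left ?_ hNβ0
              refine mul_le_mul_of_nonneg_right ?_ (norm_nonneg _)
              rw [nL_sub_rev]
              have := hgB L
              rwa [hL] at this
      have hT2 : |β (P' α) - β (P' (αi i))| ≤ Nβ * (C' * θ' ^ t * e i) := by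
        have heq : β (P' α) - β (P' (αi i)) = β (P' (α - αi i)) := by
          rw [map_sub, map_sub]
        rw [heq]
        calc |β (P' (α - αi i))| ≤ Nβ * ‖P' (α - αi i)‖ := apply_le' β _
          _ ≤ Nβ * (nL P' * ‖α - αi i‖) :=
              mul_le_mul_of_nonneg_left (apply_le _ _) hNβ0
          _ ≤ Nβ * (C' * θ' ^ t * e i) := by
              refine mul_le_mul_of_nonneg_left ?_ hNβ0
              refine mul_le_mul hnP' ?_ (norm_nonneg _) (by positivity)
              rw [norm_sub_rev]
              exact hea i
      have hT3 : |β (P' (αi i)) - βi i (P' (αi i))| ≤ e i * (C' * θ' ^ t * (‖α‖ + 1)) := by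
        have heq : β (P' (αi i)) - βi i (P' (αi i)) = (β - βi i) (P' (αi i)) := by
          rw [LinearMap.sub_apply]
        rw [heq]
        have hαi : ‖αi i‖ ≤ ‖α‖ + 1 := by
          have h1 : ‖αi i‖ ≤ ‖α‖ + ‖αi i - α‖ := by
            have := norm_add_le α (αi i - α)
            simpa using this
          have h2 : ‖αi i - α‖ ≤ 1 := (hea i).trans (hi.le.trans hδ1)
          linarith
        calc |(β - βi i) (P' (αi i))| ≤ nL (β - βi i) * ‖P' (αi i)‖ := apply_le' _ _
          _ ≤ e i * (C' * θ' ^ t * (‖α‖ + 1)) := by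
              refine mul_le_mul ?_ ?_ (norm_nonneg _) (he0 i)
              · rw [nL_sub_rev]; exact heb i
              · calc ‖P' (αi i)‖ ≤ nL P' * ‖αi i‖ := apply_le _ _
                  _ ≤ (C' * θ' ^ t) * (‖α‖ + 1) :=
                      mul_le_mul hnP' hαi (norm_nonneg _) (by positivity)
      have habs : |β (P α) - βi i (P' (αi i))|
          ≤ |β (P α) - β (P' α)| + |β (P' α) - β (P' (αi i))|
            + |β (P' (αi i)) - βi i (P' (αi i))| := by
        calc |β (P α) - βi i (P' (αi i))|
            ≤ |β (P α) - β (P' (αi i))| + |β (P' (αi i)) - βi i (P' (αi i))| :=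
              abs_sub_le _ _ _
          _ ≤ |β (P α) - β (P' α)| + |β (P' α) - β (P' (αi i))|
              + |β (P' (αi i)) - βi i (P' (αi i))| := by
              have := abs_sub_le (β (P α)) (β (P' α)) (β (P' (αi i)))
              linarith
      have hcomb : |β (P α) - βi i (P' (αi i))|
          ≤ Nβ * (e i * C' ^ 2 * t * θ' ^ t / θ' * ‖α‖) + Nβ * (C' * θ' ^ t * e i)
            + e i * (C' * θ' ^ t * (‖α‖ + 1)) := habs.trans (add_le_add (add_le_add hT1 hT2) hT3)
      have hmul := mul_le_mul_of_nonneg_left hcomb hγt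
      refine hmul.trans (le_of_eq ?_)
      rw [hhdef, hAdef, hBdef, hrdef]
      have hθ'ne : θ' ≠ 0 := ne_of_gt hθ'0
      field_simp
      ring
    calc (∑' t : ℕ, ENNReal.ofReal (γ ^ t * |β (wordMap τ (strPrefix x t) α) -
            βi i (wordMap (τi i) (strPrefix x t) (αi i))|))
        ≤ ∑' t : ℕ, ENNReal.ofReal (e i * h t) :=
          ENNReal.tsum_le_tsum fun t => ENNReal.ofReal_le_ofReal (hpt t)
      _ = ENNReal.ofReal (∑' t : ℕ, e i * h t) :=
          (ENNReal.ofReal_tsum_of_nonneg (fun t => mul_nonneg (he0 i) (hh0 t))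
            (hsum.mul_left _)).symm
      _ = ENNReal.ofReal (e i * K) := by rw [hKdef, tsum_mul_left]
  have hupper : Tendsto (fun i => ENNReal.ofReal (e i * K)) atTop (𝓝 (0:ℝ≥0∞)) := by
    have h1 : Tendsto (fun i => e i * K) atTop (𝓝 0) := by
      simpa using he.mul_const K
    simpa using ENNReal.tendsto_ofReal h1
  exact tendsto_of_tendsto_of_tendsto_of_le_of_le' tendsto_const_nhds hupper
    (Eventually.of_forall fun i => zero_le) hub
end
end

section
/- Let 0 < γ < 1 and let g : ℕ → ℝ satisfy g(l) > 0 for all l and g(l) = c^{o(l)} for some c > 1 (i.e., log g(l)/l → 0 as l → ∞). Over the one-letter alphabet Σ = {a}, consider the one-dimensional WFAs A with f_A(a^l) = 1 for all l, and A_i (i ∈ ℕ) with f_{A_i}(a^l) = (1 + 2^{-i})^l for all l. Then lim_{i→∞} sup_{x∈Σ^∞} Σ_{t=0}^∞ γ^t |f_A(x_{≤t}) − f_{A_i}(x_{≤t})| = 0, yet for every i ∈ ℕ, sup_{l∈ℕ} |f_A(a^l) − f_{A_i}(a^l)| / g(l) = ∞. In particular, the γ-bisimulation pseudometric d_γ is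 not input g-continuous. -/
open Filter Topology ENNReal

noncomputable section

/-- Over the one-letter alphabet, for the one-dimensional WFAs `A`
with `f_A(a^l) = 1` and `A_i` with `f_{A_i}(a^l) = (1 + 2^{-i})^l`: the `γ`-bisimulation
distances `d_γ(A, A_i)` tend to `0`, yet for every `i` the sup over `l` of
`|f_A(a^l) − f_{A_i}(a^l)| / g(l)` is infinite, whenever `0 < γ < 1`, `g > 0` and
`g(l) = c^{o(l)}` (i.e. `log g(l) / l → 0`). Hence `d_γ` is not input `g`-continuous. -/
theorem stmt10 (γ : ℝ) (hγ0 : 0 < γ) (hγ1 : γ < 1)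
    (g : ℕ → ℝ) (hg : ∀ l : ℕ, 0 < g l) (c : ℝ) (hc : 1 < c)
    (hgo : Tendsto (fun l : ℕ => Real.log (g l) / l) atTop (𝓝 0))
    {V : Type*} [AddCommGroup V] [Module ℝ V] [FiniteDimensional ℝ V]
    (hdimV : Module.finrank ℝ V = 1)
    (α : V) (β : V →ₗ[ℝ] ℝ) (τ : Unit → V →ₗ[ℝ] V)
    (hA : ∀ l : ℕ, β (wordMap τ (List.replicate l ()) α) = 1)
    {Vi : ℕ → Type*} [∀ i, AddCommGroup (Vi i)] [∀ i, Module ℝ (Vi i)]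
    [∀ i, FiniteDimensional ℝ (Vi i)] (hdimVi : ∀ i, Module.finrank ℝ (Vi i) = 1)
    (αi : ∀ i, Vi i) (βi : ∀ i, Vi i →ₗ[ℝ] ℝ) (τi : ∀ i, Unit → Vi i →ₗ[ℝ] Vi i)
    (hAi : ∀ i l : ℕ,
      βi i (wordMap (τi i) (List.replicate l ()) (αi i)) = (1 + (2 : ℝ)⁻¹ ^ i) ^ l) :
    Tendsto (fun i => ⨆ x : ℕ → Unit, ∑' t : ℕ,
        ENNReal.ofReal (γ ^ t * |β (wordMap τ (strPrefix x t) α) -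
          βi i (wordMap (τi i) (strPrefix x t) (αi i))|))
      atTop (𝓝 (0 : ℝ≥0∞)) ∧
    ∀ i : ℕ, (⨆ l : ℕ, ENNReal.ofReal
        (|β (wordMap τ (List.replicate l ()) α) -
          βi i (wordMap (τi i) (List.replicate l ()) (αi i))| / g l)) = ⊤ := by
  have hpre : ∀ (x : ℕ → Unit) (t : ℕ), strPrefix x t = List.replicate t () := by
    intro x t
    unfold strPrefix
    rw [show (fun i : Fin t => x i) = fun _ => () from rfl, List.ofFn_const]
  set ε : ℕ → ℝ := fun i => (2 : ℝ)⁻¹ ^ i with hε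
  have hε0 : ∀ i, 0 < ε i := fun i => by positivity
  have hεlim : Tendsto ε atTop (𝓝 0) :=
    tendsto_pow_atTop_nhds_zero_of_lt_one (by norm_num) (by norm_num)
  have habs : ∀ i l : ℕ, |(1 : ℝ) - (1 + ε i) ^ l| = (1 + ε i) ^ l - 1 := by
    intro i l
    rw [abs_sub_comm, abs_of_nonneg]
    have : (1 : ℝ) ≤ (1 + ε i) ^ l := one_le_pow₀ (by linarith [hε0 i])
    linarith
  constructor
  · -- Part 1
    set a : ℕ → ℝ := fun i => γ * (1 + ε i) with ha
    have haγ : ∀ i, γ ≤ a i := fun i => by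
      have h := (hε0 i).le
      show γ ≤ γ * (1 + ε i)
      nlinarith
    have ha0 : ∀ i, 0 ≤ a i := fun i => le_trans hγ0.le (haγ i)
    have halim : Tendsto a atTop (𝓝 γ) := by
      have : Tendsto (fun i => γ * (1 + ε i)) atTop (𝓝 (γ * (1 + 0))) :=
        tendsto_const_nhds.mul (tendsto_const_nhds.add hεlim)
      simpa using this
    have h1 : ∀ᶠ i in atTop, a i < 1 := halim.eventually_lt_const hγ1
    have hcongr : ∀ᶠ i in atTop,
        (⨆ x : ℕ → Unit, ∑' t : ℕ,
          ENNReal.ofReal (γ ^ t * |β (wordMap τ (strPrefix x t) α) -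
            βi i (wordMap (τi i) (strPrefix x t) (αi i))|))
        = ENNReal.ofReal ((1 - a i)⁻¹ - (1 - γ)⁻¹) := by
      filter_upwards [h1] with i hi
      have key : ∀ x : ℕ → Unit, ∀ t : ℕ,
          ENNReal.ofReal (γ ^ t * |β (wordMap τ (strPrefix x t) α) -
            βi i (wordMap (τi i) (strPrefix x t) (αi i))|)
          = ENNReal.ofReal (a i ^ t - γ ^ t) := by
        intro x t
        rw [hpre, hA, hAi, habs]
        congr 1
        rw [ha, mul_pow]
        ring
      have hmono : ∀ t : ℕ, γ ^ t ≤ a i ^ t := fun t =>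
        pow_le_pow_left₀ hγ0.le (haγ i) t
      have sa : Summable fun t : ℕ => a i ^ t :=
        summable_geometric_of_lt_one (ha0 i) hi
      have sγ : Summable fun t : ℕ => γ ^ t :=
        summable_geometric_of_lt_one hγ0.le hγ1
      have htsum : ∑' t : ℕ, ENNReal.ofReal (a i ^ t - γ ^ t)
          = ENNReal.ofReal ((1 - a i)⁻¹ - (1 - γ)⁻¹) := by
        rw [← ENNReal.ofReal_tsum_of_nonneg (fun t => sub_nonneg.2 (hmono t)) (sa.sub sγ)]
        rw [Summable.tsum_sub sa sγ, tsum_geometric_of_lt_one (ha0 i) hi,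
          tsum_geometric_of_lt_one hγ0.le hγ1]
      calc (⨆ x : ℕ → Unit, ∑' t : ℕ,
          ENNReal.ofReal (γ ^ t * |β (wordMap τ (strPrefix x t) α) -
            βi i (wordMap (τi i) (strPrefix x t) (αi i))|))
          = ⨆ _ : ℕ → Unit, ∑' t : ℕ, ENNReal.ofReal (a i ^ t - γ ^ t) := by
            refine iSup_congr fun x => tsum_congr fun t => key x t
        _ = ∑' t : ℕ, ENNReal.ofReal (a i ^ t - γ ^ t) := iSup_const
        _ = _ := htsum
    have hr : Tendsto (fun i => (1 - a i)⁻¹ - (1 - γ)⁻¹) atTop (𝓝 0) := by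
      have h2 : Tendsto (fun i => (1 - a i)⁻¹) atTop (𝓝 (1 - γ)⁻¹) :=
        (tendsto_const_nhds.sub halim).inv₀ (by intro h; linarith [sub_eq_zero.mp h])
      have := h2.sub (tendsto_const_nhds : Tendsto (fun _ : ℕ => (1 - γ)⁻¹) atTop _)
      simpa using this
    have : Tendsto (fun i => ENNReal.ofReal ((1 - a i)⁻¹ - (1 - γ)⁻¹)) atTop (𝓝 0) := by
      simpa using ENNReal.tendsto_ofReal hr
    exact Tendsto.congr' (hcongr.mono fun i h => h.symm) this
  · -- Part 2
    intro i
    have hlog : 0 < Real.log (1 + ε i) := Real.log_pos (by linarith [hε0 i])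
    -- (1+ε)^l / g l → ∞
    have hdiv : Tendsto (fun l : ℕ => (1 + ε i) ^ l / g l) atTop atTop := by
      have hexp : Tendsto (fun l : ℕ => (l : ℝ) * Real.log (1 + ε i) - Real.log (g l))
          atTop atTop := by
        have h1 : Tendsto (fun l : ℕ =>
            (l : ℝ) * (Real.log (1 + ε i) - Real.log (g l) / l)) atTop atTop := by
          have hfac : Tendsto (fun l : ℕ => Real.log (1 + ε i) - Real.log (g l) / l)
              atTop (𝓝 (Real.log (1 + ε i))) := by
            simpa using (tendsto_const_nhds.sub hgo)
          exact Filter.Tendsto.atTop_mul_pos hlog tendsto_natCast_atTop_atTop hfac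
        refine h1.congr' ?_
        filter_upwards [eventually_gt_atTop 0] with l hl
        have hl' : (l : ℝ) ≠ 0 := Nat.cast_ne_zero.2 hl.ne'
        field_simp
      have heq : ∀ l : ℕ, (1 + ε i) ^ l / g l
          = Real.exp ((l : ℝ) * Real.log (1 + ε i) - Real.log (g l)) := by
        intro l
        rw [Real.exp_sub, Real.exp_log (hg l), ← Real.log_pow, Real.exp_log (by positivity)]
      exact (Real.tendsto_exp_atTop.comp hexp).congr fun l => (heq l).symm
    have hmain : Tendsto (fun l : ℕ => ((1 + ε i) ^ l - 1) / g l) atTop atTop := by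
      apply tendsto_atTop_mono' atTop ?_ ((hdiv.const_mul_atTop (by norm_num : (0:ℝ) < 1/2)))
      have h2 : ∀ᶠ l : ℕ in atTop, (2 : ℝ) ≤ (1 + ε i) ^ l := by
        have : Tendsto (fun l : ℕ => (1 + ε i) ^ l) atTop atTop :=
          tendsto_pow_atTop_atTop_of_one_lt (by linarith [hε0 i])
        exact this.eventually_ge_atTop 2
      filter_upwards [h2] with l hl
      have hX : (1 + ε i) ^ l / 2 ≤ (1 + ε i) ^ l - 1 := by linarith
      calc 1/2 * ((1 + ε i) ^ l / g l) = ((1 + ε i) ^ l / 2) / g l := by ring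
        _ ≤ ((1 + ε i) ^ l - 1) / g l := (div_le_div_iff_of_pos_right (hg l)).2 hX
    rw [iSup_eq_top]
    intro b hb
    obtain ⟨l, hl⟩ := (hmain.eventually_gt_atTop b.toReal).exists
    refine ⟨l, ?_⟩
    rw [hA, hAi, habs]
    exact (ENNReal.lt_ofReal_iff_toReal_lt hb.ne).2 hl
end
end
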